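/- arXiv:0909.1424 — 3 statements merged into one kernel-verified Lean document; each statement's English description precedes it below -/
import Mathlib

section
/- Let {U1,U2} be a pair of negative skew-symmetric multisets on ℕ² with ψ^{-1}({U1,U2}) = {π1,π2}, π1 = (b_1…b_t / a_1…a_t), π2 = (c_1…c_t / d_1…d_t), and for 1 ≤ k ≤ t set U1^(k) := {(a_1,b_1),…,(a_k,b_k)}, U2^(k) := {(d_{t+1−k},c_{t+1−k}),…,(d_t,c_t)}, (P^(k),Q^(k)) := OBRSK(ψ^{-1}({U1^(k),U2^(k)})). Let p^(k)_1 < ⋯ < p^(k)_{2c_k} and q^(k)_1 < ⋯ < q^(k)_{2c_k} be the top rows of P^(k) and Q^(k), and let m(k) be the number of indices m with p^(k)_m < q^(k)_1. Then for every j with 1 ≤ j ≤ m(k) there exist a dual pair of chains {C1,C2} in {U1^(k),U2^(k)} having at most j elements in each of C1 and C2, and an integer χ ≥ j, such that the first coordinate of the χ-th element (in increasing order of first coordinates) of OBRSK(ψ^{-1}({C1,C2}))^up equals p^(k)_j, and every first coordinate of an element of C1 occurs among the first coordinates of the first χ elements of OBRSK(ψ^{-1}({C1,C2}))^up. -/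
namespace OBRSKPaper

/-! ### Pairs of two-row arrays -/

/-- A pair of two-row arrays of positive integers: `π1` has top row `b` and bottom row `a`;
`π2` has top row `c` and bottom row `d`.  Columns are listed from left to right. -/
structure ArrayPair where
  a : List ℕ
  b : List ℕ
  c : List ℕ
  d : List ℕ

/-- The duality property for a list of (entry, dual entry) pairs: if `x ≤ y` then
`dual x ≥ dual y`, if `x < y` then `dual x > dual y`, and if `x = y` then `dual x = dual y`. -/
def DualityProp (l : List (ℕ × ℕ)) : Prop :=
  ∀ p ∈ l, ∀ q ∈ l,
    (p.1 ≤ q.1 → q.2 ≤ p.2) ∧ (p.1 < q.1 → q.2 < p.2) ∧ (p.1 = q.1 → p.2 = q.2)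

/-- The two-row array with top row `top` and bottom row `bot` is lexicographic:
the top row weakly decreases, and bottom-row entries weakly decrease below equal
top-row entries. -/
def LexTwoRow (top bot : List ℕ) : Prop :=
  ∀ k, k + 1 < top.length →
    top.getD (k+1) 0 ≤ top.getD k 0 ∧
    (top.getD (k+1) 0 = top.getD k 0 → bot.getD (k+1) 0 ≤ bot.getD k 0)

namespace ArrayPair

/-- The number of columns of each array of the pair. -/
def t (π : ArrayPair) : ℕ := π.b.length

/-- The degree of a pair of arrays: twice the number of columns. -/
def degree (π : ArrayPair) : ℕ := 2 * π.t

def eqLen (π : ArrayPair) : Prop :=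
  π.a.length = π.t ∧ π.c.length = π.t ∧ π.d.length = π.t

/-- The list of (entry, dual entry) pairs of a pair of arrays: the dual of `a i` is
`c (t+1-i)`, of `b i` is `d (t+1-i)`, of `c i` is `a (t+1-i)`, of `d i` is `b (t+1-i)`. -/
def entryDual (π : ArrayPair) : List (ℕ × ℕ) :=
  π.a.zip π.c.reverse ++ π.b.zip π.d.reverse ++ π.c.zip π.a.reverse ++ π.d.zip π.b.reverse

/-- `{π1, π2}` is a pair of skew-symmetric lexicographic arrays. -/
def SkewSymmLex (π : ArrayPair) : Prop :=
  π.eqLen ∧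
  (∀ x ∈ π.a ++ π.b ++ π.c ++ π.d, 0 < x) ∧
  LexTwoRow π.b π.a ∧
  LexTwoRow π.d π.c ∧
  (∀ p ∈ π.a.zip π.d.reverse, p.1 < p.2) ∧
  (∀ p ∈ π.b.zip π.c.reverse, p.1 < p.2) ∧
  DualityProp π.entryDual ∧
  (∀ i < π.t,
    (π.a.getD i 0 < π.b.getD i 0 → π.d.getD (π.t - 1 - i) 0 < π.c.getD (π.t - 1 - i) 0) ∧
    (π.b.getD i 0 < π.a.getD i 0 → π.c.getD (π.t - 1 - i) 0 < π.d.getD (π.t - 1 - i) 0))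

def Negative (π : ArrayPair) : Prop := ∀ p ∈ π.a.zip π.b, p.1 < p.2

def Positive (π : ArrayPair) : Prop := ∀ p ∈ π.a.zip π.b, p.2 < p.1

def Nonvanishing (π : ArrayPair) : Prop := ∀ p ∈ π.a.zip π.b, p.1 ≠ p.2

/-- The negative part of a pair: the columns of `π1` with `a i < b i`, together with
their dual columns of `π2` (those with `d j < c j`). -/
def negPart (π : ArrayPair) : ArrayPair where
  a := ((π.a.zip π.b).filter (fun p => decide (p.1 < p.2))).map Prod.fst
  b := ((π.a.zip π.b).filter (fun p => decide (p.1 < p.2))).map Prod.snd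
  c := ((π.c.zip π.d).filter (fun p => decide (p.2 < p.1))).map Prod.fst
  d := ((π.c.zip π.d).filter (fun p => decide (p.2 < p.1))).map Prod.snd

/-- The positive part of a pair: the columns of `π1` with `a i > b i`, together with
their dual columns of `π2`. -/
def posPart (π : ArrayPair) : ArrayPair where
  a := ((π.a.zip π.b).filter (fun p => decide (p.2 < p.1))).map Prod.fst
  b := ((π.a.zip π.b).filter (fun p => decide (p.2 < p.1))).map Prod.snd
  c := ((π.c.zip π.d).filter (fun p => decide (p.1 < p.2))).map Prod.fst
  d := ((π.c.zip π.d).filter (fun p => decide (p.1 < p.2))).map Prod.snd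

/-- The bijection ψ from pairs of arrays to pairs of multisets on ℕ²:
`{(b/a),(c/d)} ↦ ({(a i, b i)}, {(d i, c i)})`. -/
def toMS (π : ArrayPair) : Multiset (ℕ × ℕ) × Multiset (ℕ × ℕ) :=
  (↑(π.a.zip π.b), ↑(π.d.zip π.c))

/-- The pair corresponding to `{U1^(k), U2^(k)}` : the first `k` columns of `π1`
together with the last `k` columns of `π2`. -/
def prefixPair (π : ArrayPair) (k : ℕ) : ArrayPair :=
  ⟨π.a.take k, π.b.take k, π.c.drop (π.t - k), π.d.drop (π.t - k)⟩

end ArrayPair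

/-- Comparison placing columns in decreasing lexicographic order. -/
def lexSortKey : ℕ × ℕ → ℕ × ℕ → Bool := fun x y =>
  decide (y.1 < x.1 ∨ (x.1 = y.1 ∧ y.2 ≤ x.2))

/-- The involution `L` : `L {π1, π2} := {l(π1), lᵗ(π2)}`, where `l` switches the two rows
and rearranges columns so that the result is lexicographic, and `lᵗ` switches the two rows
and rearranges columns so that the transpose of the result is lexicographic. -/
def Lmap (π : ArrayPair) : ArrayPair :=
  let s1 := (π.a.zip π.b).mergeSort lexSortKey
  let s2 := (π.c.zip π.d).mergeSort lexSortKey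
  ⟨s1.map Prod.snd, s1.map Prod.fst, s2.map Prod.snd, s2.map Prod.fst⟩

/-! ### Notched bitableaux -/

/-- A notched bitableau: a pair of fillings (lists of rows, top to bottom). -/
structure Bitab where
  P : List (List ℕ)
  Q : List (List ℕ)

/-- Count, as an integer, of entries of the list that are `≤ z`. -/
def cntLE (l : List ℕ) (z : ℕ) : ℤ := ((l.filter (fun x => decide (x ≤ z))).length : ℤ)

/-- `diffLE A B A' B'` expresses `A − B ≤ A' − B'` for the multisets
`A − B := A ∪̇ (ℕ∖B)`: for every `z`, the number of elements `≤ z` of `A − B` is at least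
the number of elements `≤ z` of `A' − B'`. -/
def diffLE (A B A' B' : List ℕ) : Prop :=
  ∀ z : ℕ, cntLE A' z - cntLE B' z ≤ cntLE A z - cntLE B z

/-- `diffLT A B A' B'` expresses `A − B < A' − B'`. -/
def diffLT (A B A' B' : List ℕ) : Prop := diffLE A B A' B' ∧ ¬ diffLE A' B' A B

namespace Bitab

/-- The degree: total number of boxes of `P`. -/
def degree (B : Bitab) : ℕ := (B.P.map List.length).sum

def SameShape (B : Bitab) : Prop := B.P.map List.length = B.Q.map List.length

def RowStrict (B : Bitab) : Prop :=
  (∀ r ∈ B.P, r.Pairwise (· < ·)) ∧ (∀ r ∈ B.Q, r.Pairwise (· < ·))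

def EntriesPos (B : Bitab) : Prop :=
  (∀ r ∈ B.P, ∀ x ∈ r, 0 < x) ∧ (∀ r ∈ B.Q, ∀ x ∈ r, 0 < x)

def Semistandard (B : Bitab) : Prop :=
  B.SameShape ∧ B.RowStrict ∧ B.EntriesPos ∧
  ∀ i, i + 1 < B.P.length →
    diffLE (B.P.getD i []) (B.Q.getD i []) (B.P.getD (i+1) []) (B.Q.getD (i+1) [])

/-- Negative: semistandard and the last row satisfies `P_r − Q_r < ∅`. -/
def Negative (B : Bitab) : Prop :=
  B.Semistandard ∧ ∀ i, B.P.length = i + 1 → diffLT (B.P.getD i []) (B.Q.getD i []) [] []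

/-- Positive: semistandard and the first row satisfies `∅ < P_1 − Q_1`. -/
def Positive (B : Bitab) : Prop :=
  B.Semistandard ∧ (B.P ≠ [] → diffLT [] [] (B.P.getD 0 []) (B.Q.getD 0 []))

/-- Nonvanishing: semistandard and every row is negative or positive. -/
def Nonvanishing (B : Bitab) : Prop :=
  B.Semistandard ∧ ∀ i < B.P.length,
    diffLT (B.P.getD i []) (B.Q.getD i []) [] [] ∨ diffLT [] [] (B.P.getD i []) (B.Q.getD i [])

/-- The list of (entry, dual entry) pairs of a notched bitableau: the dual of the entry in
position `(i,j)` of `P` is the entry in position `(i, k_i+1−j)` of `Q` and vice versa. -/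
def entryDual (B : Bitab) : List (ℕ × ℕ) :=
  ((B.P.zip B.Q).map (fun pq => pq.1.zip pq.2.reverse)).flatten ++
  ((B.P.zip B.Q).map (fun pq => pq.2.zip pq.1.reverse)).flatten

/-- A skew-symmetric notched bitableau: semistandard, of even size, satisfying the
duality property. -/
def SkewSymm (B : Bitab) : Prop :=
  B.Semistandard ∧ (∀ r ∈ B.P, Even r.length) ∧ DualityProp B.entryDual

end Bitab

/-- The involution ι : reverse the order of the rows of `(Q, P)`. -/
def iota (B : Bitab) : Bitab := ⟨B.Q.reverse, B.P.reverse⟩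

/-! ### The OBRSK algorithm -/

/-- Insert `x` into the list `l` at (0-based) position `i`, shifting later entries right. -/
def insertAt (l : List ℕ) (i : ℕ) (x : ℕ) : List ℕ := l.take i ++ x :: l.drop i

/-- One row of bounded insertion: `x` bumps the smallest entry of the row that is `≥ x`
and `< b`; if there is no such entry, `x` is placed in a new box at the right end of the
entries `< b`.  Returns the new row, the bumped entry (if any), and the 1-indexed forward
position of the new/overwritten box. -/
def insertRowP (b x : ℕ) (row : List ℕ) : List ℕ × Option ℕ × ℕ :=
  match row.findIdx? (fun y => decide (x ≤ y ∧ y < b)) with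
  | some j => (row.set j x, some (row.getD j 0), j + 1)
  | none =>
      let j := (row.takeWhile (fun y => decide (y < b))).length
      (insertAt row j x, none, j + 1)

/-- Bounded insertion of `x` into the rows of `P`, bounded by `b`.  Returns the new rows
and the list of 1-indexed forward positions of the bumped/new boxes, row by row. -/
def insertP (b : ℕ) : List (List ℕ) → ℕ → List (List ℕ) × List ℕ
  | [], x => ([[x]], [1])
  | row :: rest, x =>
      match insertRowP b x row with
      | (row', none, j) => (row' :: rest, [j])
      | (row', some y, j) =>
          let (rest', js) := insertP b rest y
          (row' :: rest', j :: js)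

/-- Dual insertion of `x` into the rows of `Q`, at the backward positions recorded in `js`:
in each intermediate row the backward `j`-th entry is bumped, and in the final row the
incoming value is placed in a new box at the backward `j`-th position. -/
def insertQ : List (List ℕ) → List ℕ → ℕ → List (List ℕ)
  | rows, [], _ => rows
  | [], _ :: _, x => [[x]]
  | row :: rest, [j], x => insertAt row (row.length + 1 - j) x :: rest
  | row :: rest, j :: js, x =>
      row.set (row.length - j) x :: insertQ rest js (row.getD (row.length - j) 0)

/-- Modify the `k`-th (0-based) row of a list of rows. -/
def modifyRow (rows : List (List ℕ)) (k : ℕ) (f : List ℕ → List ℕ) : List (List ℕ) :=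
  rows.take k ++ (match rows.drop k with
    | [] => []
    | r :: rest => f r :: rest)

/-- One step of the OBRSK algorithm, applied with the quadruple
`(a_{i+1}, b_{i+1}, c_{t−i}, d_{t−i})`. -/
def obrskStep (PQ : List (List ℕ) × List (List ℕ)) (q : ℕ × ℕ × ℕ × ℕ) :
    List (List ℕ) × List (List ℕ) :=
  let (x, b, c, d) := q
  let Pjs := insertP b PQ.1 x
  let K := Pjs.2.length
  let Q' := insertQ PQ.2 Pjs.2 c
  (modifyRow Pjs.1 (K - 1) (fun r => r ++ [d]), modifyRow Q' (K - 1) (fun r => b :: r))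

/-- The list of quadruples `(a_{i+1}, b_{i+1}, c_{t−i}, d_{t−i})`, `i = 0, …, t−1`. -/
def ArrayPair.quads (π : ArrayPair) : List (ℕ × ℕ × ℕ × ℕ) :=
  π.a.zip (π.b.zip (π.c.reverse.zip π.d.reverse))

/-- The notched bitableau `(P^(i), Q^(i))` produced after `i` steps of the OBRSK algorithm. -/
def stepState (π : ArrayPair) (i : ℕ) : List (List ℕ) × List (List ℕ) :=
  (π.quads.take i).foldl obrskStep ([], [])

/-- The OBRSK correspondence on pairs of negative skew-symmetric lexicographic arrays:
`OBRSK {π1, π2} := (P^(t), Q^(t))`. -/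
def OBRSKneg (π : ArrayPair) : Bitab :=
  ⟨(stepState π π.t).1, (stepState π π.t).2⟩

/-- The OBRSK correspondence on pairs of positive skew-symmetric lexicographic arrays. -/
def OBRSKpos (π : ArrayPair) : Bitab := iota (OBRSKneg (Lmap π))

/-- The OBRSK correspondence on pairs of nonvanishing skew-symmetric lexicographic arrays:
the bitableau whose negative and positive parts are the OBRSK images of the negative and
positive parts of the pair. -/
def OBRSK (π : ArrayPair) : Bitab :=
  ⟨(OBRSKneg π.negPart).P ++ (OBRSKpos π.posPart).P,
   (OBRSKneg π.negPart).Q ++ (OBRSKpos π.posPart).Q⟩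

/-! ### The reverse step -/

/-- One row of reverse bounded insertion: the incoming entry `x` bumps the largest entry
of the row smaller than `x`.  Returns the new row, the bumped-out entry, and the 1-indexed
forward position of the bumped box. -/
def revBumpRow (x : ℕ) (row : List ℕ) : List ℕ × ℕ × ℕ :=
  let k := (row.filter (fun y => decide (y < x))).length
  (row.set (k - 1) x, row.getD (k - 1) 0, k)

/-- Reverse bounded insertion upward through the given rows (listed bottom-to-top);
returns the new rows, the ejected entry, and the positions of the bumped boxes. -/
def revInsertUp : List (List ℕ) → ℕ → List (List ℕ) × ℕ × List ℕ
  | [], x => ([], x, [])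
  | row :: rest, x =>
      let rj := revBumpRow x row
      let rec' := revInsertUp rest rj.2.1
      (rj.1 :: rec'.1, rec'.2.1, rj.2.2 :: rec'.2.2)

/-- Dual reverse insertion upward through the given rows of `Q` (listed bottom-to-top),
along the dual (backward) positions `js`; returns the new rows and the ejected entry. -/
def revInsertUpQ : List (List ℕ) → List ℕ → ℕ → List (List ℕ) × ℕ
  | rows, [], x => (rows, x)
  | [], _ :: _, x => ([], x)
  | row :: rest, j :: js, x =>
      let idx := row.length - j
      let rec' := revInsertUpQ rest js (row.getD idx 0)
      (row.set idx x :: rec'.1, rec'.2)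

/-- One reverse step of OBRSK: produces `(P', Q')` and the integers `a, b, c, d`. -/
def reverseStep (B : Bitab) : Bitab × ℕ × ℕ × ℕ × ℕ :=
  let b := (B.Q.flatten.min?).getD 0
  let s := B.Q.length - 1 - B.Q.reverse.findIdx (fun r => r.contains b)
  let d := ((B.P.getD s []).getLast?).getD 0
  let P1 := modifyRow B.P s List.dropLast
  let Q1 := modifyRow B.Q s List.tail
  let rowS := P1.getD s []
  let k0 := (rowS.filter (fun y => decide (y < b))).length
  let x := rowS.getD (k0 - 1) 0
  let rowS' := rowS.eraseIdx (k0 - 1)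
  let up := revInsertUp (P1.take s).reverse x
  let P' := up.1.reverse ++ rowS' :: P1.drop (s + 1)
  let rowQ := Q1.getD s []
  let vQ := rowQ.getD (rowQ.length - k0) 0
  let rowQ' := rowQ.eraseIdx (rowQ.length - k0)
  let upQ := revInsertUpQ (Q1.take s).reverse up.2.2 vQ
  let Q' := upQ.1.reverse ++ rowQ' :: Q1.drop (s + 1)
  (⟨P'.filter (fun r => decide (r ≠ [])), Q'.filter (fun r => decide (r ≠ []))⟩,
    up.2.1, b, upQ.2, d)

/-! ### Multisets on ℕ², chains, boundedness -/

/-- The order on multisets on ℕ² : `msLE S T` means `S ≤ T`, i.e.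
`S₍₁₎ − S₍₂₎ ≤ T₍₁₎ − T₍₂₎`. -/
def msLE (S T : Multiset (ℕ × ℕ)) : Prop :=
  ∀ z : ℕ,
    ((T.filter (fun p => p.1 ≤ z)).card : ℤ) - ((T.filter (fun p => p.2 ≤ z)).card : ℤ) ≤
    ((S.filter (fun p => p.1 ≤ z)).card : ℤ) - ((S.filter (fun p => p.2 ≤ z)).card : ℤ)

namespace Bitab

/-- `(P,Q)^up` : the multiset of pairs formed by the top rows. -/
def up (B : Bitab) : Multiset (ℕ × ℕ) := ↑((B.P.getD 0 []).zip (B.Q.getD 0 []))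

/-- `(P,Q)^down` : the multiset of pairs formed by the bottom rows. -/
def down (B : Bitab) : Multiset (ℕ × ℕ) :=
  ↑((B.P.getD (B.P.length - 1) []).zip (B.Q.getD (B.Q.length - 1) []))

end Bitab

/-- `σ` represents a dual pair of chains in ℕ² : `σ` is a pair of skew-symmetric
lexicographic arrays whose first array lists a chain (first coordinates strictly
increasing, second coordinates strictly decreasing along the columns). -/
def IsChainArr (σ : ArrayPair) : Prop :=
  σ.SkewSymmLex ∧ List.Chain' (· < ·) σ.a ∧ List.Chain' (· > ·) σ.b

/-- `σ` represents a dual pair of chains in the pair of skew-symmetric multisets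
represented by `π` : both chains are contained in the respective underlying sets, and for
each column of the chain array, the dual column within `π` of its leftmost occurrence
coincides with its dual column within `σ`. -/
def DualChainIn (π σ : ArrayPair) : Prop :=
  IsChainArr σ ∧
  (∀ x ∈ σ.a.zip σ.b, x ∈ π.a.zip π.b) ∧
  (∀ x ∈ σ.d.zip σ.c, x ∈ π.d.zip π.c) ∧
  (∀ i < σ.t,
    (π.c.getD (π.t - 1 - (π.b.zip π.a).findIdx (fun x => x == (σ.b.getD i 0, σ.a.getD i 0))) 0,
     π.d.getD (π.t - 1 - (π.b.zip π.a).findIdx (fun x => x == (σ.b.getD i 0, σ.a.getD i 0))) 0)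
      = (σ.c.getD (σ.t - 1 - i) 0, σ.d.getD (σ.t - 1 - i) 0))

/-- The pair represented by `π` is bounded below by `T` : for every dual pair of chains in
it, `T ≤ OBRSK(negative part of the chain pair)^up`. -/
def PairBoundedT (π : ArrayPair) (T : Finset (ℕ × ℕ)) : Prop :=
  ∀ σ : ArrayPair, DualChainIn π σ → msLE ↑T.val (OBRSK σ.negPart).up

/-- The pair represented by `π` is bounded above by `W` : for every dual pair of chains in
it, `OBRSK(positive part of the chain pair)^down ≤ W`. -/
def PairBoundedW (π : ArrayPair) (W : Finset (ℕ × ℕ)) : Prop :=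
  ∀ σ : ArrayPair, DualChainIn π σ → msLE (OBRSK σ.posPart).down ↑W.val

/-- The pair represented by `π` is bounded by `T, W`. -/
def PairBounded (π : ArrayPair) (T W : Finset (ℕ × ℕ)) : Prop :=
  PairBoundedT π T ∧ PairBoundedW π W

namespace Bitab

/-- The bitableau is bounded below by `T` : if its top row is negative (i.e. the negative
part is nonempty), then `T₍₁₎ − T₍₂₎ ≤ P₁⁻ − Q₁⁻`. -/
def BoundedByT (B : Bitab) (T : Finset (ℕ × ℕ)) : Prop :=
  diffLT (B.P.getD 0 []) (B.Q.getD 0 []) [] [] →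
    msLE ↑T.val ↑((B.P.getD 0 []).zip (B.Q.getD 0 []))

/-- The bitableau is bounded above by `W` : if its bottom row is positive (i.e. the
positive part is nonempty), then `P⁺_s − Q⁺_s ≤ W₍₁₎ − W₍₂₎`. -/
def BoundedByW (B : Bitab) (W : Finset (ℕ × ℕ)) : Prop :=
  diffLT [] [] (B.P.getD (B.P.length - 1) []) (B.Q.getD (B.Q.length - 1) []) →
    msLE ↑((B.P.getD (B.P.length - 1) []).zip (B.Q.getD (B.Q.length - 1) [])) ↑W.val

/-- The bitableau is bounded by `T, W`. -/
def BoundedBy (B : Bitab) (T W : Finset (ℕ × ℕ)) : Prop :=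
  B.BoundedByT T ∧ B.BoundedByW W

end Bitab

/-- A negative subset of ℕ². -/
def NegSubset (T : Finset (ℕ × ℕ)) : Prop := ∀ p ∈ T, p.1 < p.2

/-- A positive subset of ℕ². -/
def PosSubset (W : Finset (ℕ × ℕ)) : Prop := ∀ p ∈ W, p.2 < p.1

/-- The coordinate projections `T₍₁₎`, `T₍₂₎` have no repeated elements. -/
def ProjNodup (T : Finset (ℕ × ℕ)) : Prop :=
  (T.val.map Prod.fst).Nodup ∧ (T.val.map Prod.snd).Nodup

/-! ### The orthogonal Grassmannian combinatorics -/

/-- `Ĩ(d)` : the set of `d`-element subsets of `{1, …, 2d}` containing exactly one of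
`k, k* = 2d+1−k` for every `k`, with an even number of elements exceeding `d`. -/
def Itilde (d : ℕ) : Set (Finset ℕ) :=
  {v | v ⊆ Finset.Icc 1 (2 * d) ∧ v.card = d ∧
    (∀ k ∈ Finset.Icc 1 (2 * d), (k ∈ v ↔ (2 * d + 1 - k) ∉ v)) ∧
    Even ((v.filter (fun x => d < x)).card)}

/-- `OR(β) = {(r,c) : r ∈ β̄, c ∈ β, r < c*}`. -/
def ORset (d : ℕ) (β : Finset ℕ) : Set (ℕ × ℕ) :=
  {p | p.1 ∈ Finset.Icc 1 (2 * d) ∧ p.1 ∉ β ∧ p.2 ∈ β ∧ p.1 < 2 * d + 1 - p.2}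

/-- `U^# := {(c*, r*) : (r,c) ∈ U}` (with multiplicities). -/
def hashMS (d : ℕ) (U : Multiset (ℕ × ℕ)) : Multiset (ℕ × ℕ) :=
  U.map (fun p => (2 * d + 1 - p.2, 2 * d + 1 - p.1))

/-- `ψ(π)` is a pair of skew-symmetric multisets on `β̄×β`, i.e. of the form `{U, U^#}`
with `U` a multiset on `OR(β)`. -/
def ArrayPair.OnBB (d : ℕ) (β : Finset ℕ) (π : ArrayPair) : Prop :=
  (∀ x ∈ π.a.zip π.b, x ∈ ORset d β) ∧
  (↑(π.d.zip π.c) : Multiset (ℕ × ℕ)) = hashMS d ↑(π.a.zip π.b)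

/-- A skew-symmetric notched bitableau is on `β̄×β` : all entries of `P` are in `β̄`, all
entries of `Q` are in `β`, and every entry plus its dual equals `2d+1`. -/
def Bitab.OnBB (d : ℕ) (β : Finset ℕ) (B : Bitab) : Prop :=
  (∀ r ∈ B.P, ∀ x ∈ r, x ∈ Finset.Icc 1 (2 * d) ∧ x ∉ β) ∧
  (∀ r ∈ B.Q, ∀ x ∈ r, x ∈ β) ∧
  (∀ p ∈ B.entryDual, p.1 + p.2 = 2 * d + 1)

/-- The partial order on `Ĩ(d)` : `v ≤ w` iff the `i`-th smallest element of `v` is `≤`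
the `i`-th smallest element of `w` for every `i`. -/
def IleD (v w : Finset ℕ) : Prop :=
  v.card = w.card ∧
  ∀ i < v.card, (v.sort (· ≤ ·)).getD i 0 ≤ (w.sort (· ≤ ·)).getD i 0

def IltD (v w : Finset ℕ) : Prop := IleD v w ∧ v ≠ w

/-- `I_β(Skew-symm)` : pairs `(R, S)` with `R ⊆ β̄`, `S ⊆ β`, `|R| = |S|` even, and
`r_i + s_{2l+1−i} = 2d+1` for all `i`. -/
def IbSS (d : ℕ) (β : Finset ℕ) : Set (Finset ℕ × Finset ℕ) :=
  {RS | RS.1 ⊆ Finset.Icc 1 (2 * d) \ β ∧ RS.2 ⊆ β ∧ RS.1.card = RS.2.card ∧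
    Even RS.1.card ∧
    ∀ i < RS.1.card,
      (RS.1.sort (· ≤ ·)).getD i 0 + (RS.2.sort (· ≤ ·)).getD (RS.1.card - 1 - i) 0
        = 2 * d + 1}

/-- `θ_i := P_i ∪̇ (β ∖ Q_i)`. -/
def rowTheta (β : Finset ℕ) (p q : List ℕ) : Finset ℕ := p.toFinset ∪ (β \ q.toFinset)

/-- An extended `β`-chain, listed with strictly increasing rows and strictly decreasing
columns. -/
def IsExtChain (ch : List (ℕ × ℕ)) : Prop :=
  List.Chain' (fun x y => x.1 < y.1 ∧ y.2 < x.2) ch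

/-- The negative part `C⁻` of an extended chain: the elements `(r,c)` with `r < c`. -/
def chainNeg (ch : List (ℕ × ℕ)) : List (ℕ × ℕ) := ch.filter (fun p => decide (p.1 < p.2))

/-- The positive part `C⁺` of an extended chain: the elements `(r,c)` with `r > c`. -/
def chainPos (ch : List (ℕ × ℕ)) : List (ℕ × ℕ) := ch.filter (fun p => decide (p.2 < p.1))

/-- `ψ⁻¹({C, C^#})` : the pair of arrays corresponding to the dual pair of chains
`{C, C^#}` determined by an extended `β`-chain `C`. -/
def chainToPair (d : ℕ) (ch : List (ℕ × ℕ)) : ArrayPair :=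
  ⟨ch.map Prod.fst, ch.map Prod.snd,
   (ch.map (fun p => 2 * d + 1 - p.1)).reverse,
   (ch.map (fun p => 2 * d + 1 - p.2)).reverse⟩

/-- The terminating row number `K` of the bounded insertion performed at step `i`
(1-indexed) of the OBRSK algorithm. -/
def stepK (π : ArrayPair) (i : ℕ) : ℕ :=
  ((insertP (π.quads.getD (i - 1) (0, 0, 0, 0)).2.1 (stepState π (i - 1)).1
      (π.quads.getD (i - 1) (0, 0, 0, 0)).1).2).length

end OBRSKPaper

/-!
The first rows of an OBRSK tableau evolve on their own. Inserting the column `q = (a, b, c, d)`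
either overwrites with `a` the leftmost entry of the first row of `P` lying in `[a, b)`, or, if
there is none, inserts `a` after the entries smaller than `b` and appends `d`; the first row of
`Q` only records where this happened (`topStep`).

An entry `p_j < q_1` of the first row is then realized by a chain of columns, by induction on
the number of columns. An entry that was already present keeps its witness; a new entry `a` is
realized by appending `q` to the chain realizing `p_{j-1}`; a new final entry `d` by appending
`q` to the chain realizing the last old entry. In the last case `q` may bump the final box of
that chain's row, but this box is then the `d`-box of the chain's last column, and `q` replaces
that column instead.
-/

namespace OBRSKPaper

/-- A column `(a_{i+1}, b_{i+1})` of `π1` together with its dual column `(c_{t-i}, d_{t-i})` of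
`π2`, as listed by `ArrayPair.quads`. -/
abbrev Quad : Type := ℕ × ℕ × ℕ × ℕ

namespace Quad

def a (q : Quad) : ℕ := q.1
def b (q : Quad) : ℕ := q.2.1
def c (q : Quad) : ℕ := q.2.2.1
def d (q : Quad) : ℕ := q.2.2.2

def bumps (q : Quad) (y : ℕ) : Bool := decide (q.a ≤ y ∧ y < q.b)

lemma bumps_iff (q : Quad) (y : ℕ) : q.bumps y = true ↔ q.a ≤ y ∧ y < q.b := by
  simp [bumps]

end Quad

/-! ### Lists -/

section Lists

variable {R : List ℕ}

lemma getD_mem {i : ℕ} (hi : i < R.length) : R.getD i 0 ∈ R := by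
  rw [List.getD_eq_getElem _ _ hi]; exact List.getElem_mem hi

lemma mem_iff_getD {x : ℕ} : x ∈ R ↔ ∃ i < R.length, R.getD i 0 = x := by
  rw [List.mem_iff_getElem]
  exact exists_congr fun i => ⟨fun ⟨hi, hx⟩ => ⟨hi, by rw [List.getD_eq_getElem _ _ hi, hx]⟩,
    fun ⟨hi, hx⟩ => ⟨hi, by rw [← hx, List.getD_eq_getElem _ _ hi]⟩⟩

lemma mem_take_iff_getD {m x : ℕ} : x ∈ R.take m ↔ ∃ i < min m R.length, R.getD i 0 = x := by
  rw [mem_iff_getD, List.length_take]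
  refine exists_congr fun i => and_congr_right fun hi => ?_
  rw [List.getD_eq_getElem _ _ (by simpa using hi), List.getD_eq_getElem _ _ (by omega),
    List.getElem_take]

lemma getD_mem_take {i m : ℕ} (h : i < m) (hi : i < R.length) : R.getD i 0 ∈ R.take m :=
  mem_take_iff_getD.2 ⟨i, by omega, rfl⟩

lemma getD_mem_drop {i m : ℕ} (h : m ≤ i) (hi : i < R.length) : R.getD i 0 ∈ R.drop m := by
  rw [List.getD_eq_getElem _ _ hi, List.mem_drop_iff_getElem]
  exact ⟨i - m, by omega, by congr 1; omega⟩

lemma getD_le_getD (hR : R.Pairwise (· ≤ ·)) {i j : ℕ} (hij : i ≤ j) (hj : j < R.length) :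
    R.getD i 0 ≤ R.getD j 0 := by
  rw [List.getD_eq_getElem _ _ (by omega), List.getD_eq_getElem _ _ hj]
  rcases hij.lt_or_eq with hij | rfl
  · exact List.pairwise_iff_getElem.1 hR i j (by omega) hj hij
  · exact le_rfl

lemma getD_set_self {i : ℕ} (hi : i < R.length) (x : ℕ) : (R.set i x).getD i 0 = x := by
  simp [hi]

lemma getD_set_ne {i j : ℕ} (h : i ≠ j) (x : ℕ) : (R.set i x).getD j 0 = R.getD j 0 := by
  simp [h]

lemma length_insertAt {i : ℕ} (hi : i ≤ R.length) (x : ℕ) :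
    (insertAt R i x).length = R.length + 1 := by
  simp [insertAt]; omega

lemma mem_insertAt {i x y : ℕ} : y ∈ insertAt R i x ↔ y = x ∨ y ∈ R := by
  have h := List.mem_append (a := y) (s := R.take i) (t := R.drop i)
  rw [List.take_append_drop] at h
  simp only [insertAt, List.mem_append, List.mem_cons, h]
  tauto

lemma getD_insertAt_of_lt {i j : ℕ} (h : j < i) (hi : i ≤ R.length) (x : ℕ) :
    (insertAt R i x).getD j 0 = R.getD j 0 := by
  simp [insertAt, List.getElem?_append_left (show j < (R.take i).length by simp; omega), h]

lemma getD_insertAt_self {i : ℕ} (hi : i ≤ R.length) (x : ℕ) : (insertAt R i x).getD i 0 = x := by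
  simp [insertAt, show min i R.length = i by omega]

lemma getD_insertAt_of_gt {i j : ℕ} (h : i < j) (hi : i ≤ R.length) (x : ℕ) :
    (insertAt R i x).getD j 0 = R.getD (j - 1) 0 := by
  obtain ⟨k, rfl⟩ : ∃ k, j = i + 1 + k := ⟨j - i - 1, by omega⟩
  simp [insertAt, List.getElem?_append_right (show (R.take i).length ≤ i + 1 + k by simp; omega),
    show min i R.length = i by omega, show i + 1 + k - i = k + 1 by omega,
    show i + 1 + k - 1 = i + k by omega]

lemma pairwise_le_append_cons {l₁ l₂ : List ℕ} {x : ℕ} (h₁ : l₁.Pairwise (· ≤ ·))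
    (h₂ : l₂.Pairwise (· ≤ ·)) (hl₁ : ∀ y ∈ l₁, y ≤ x) (hl₂ : ∀ y ∈ l₂, x ≤ y) :
    (l₁ ++ x :: l₂).Pairwise (· ≤ ·) := by
  simp only [List.pairwise_append, List.pairwise_cons, List.mem_cons]
  exact ⟨h₁, ⟨hl₂, h₂⟩, fun y hy z hz => hz.elim (· ▸ hl₁ y hy)
    fun hz => (hl₁ y hy).trans (hl₂ z hz)⟩

lemma le_of_mem_dropWhile (hR : R.Pairwise (· ≤ ·)) (b : ℕ) :
    ∀ x ∈ R.dropWhile (fun y => decide (y < b)), b ≤ x := by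
  induction R with
  | nil => simp
  | cons y R ih =>
    rw [List.pairwise_cons] at hR
    by_cases hy : y < b
    · simpa [List.dropWhile_cons, hy] using ih hR.2
    · simp only [List.dropWhile_cons, hy, decide_false]
      intro x hx
      rcases List.mem_cons.1 hx with rfl | hx
      · exact not_lt.1 hy
      · exact (not_lt.1 hy).trans (hR.1 x hx)

lemma getD_lt_of_le_length_filter (hR : R.Pairwise (· ≤ ·)) {z j : ℕ} (hj : 1 ≤ j)
    (hjz : j ≤ (R.filter fun x => decide (x < z)).length) :
    j ≤ R.length ∧ R.getD (j - 1) 0 < z := by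
  refine ⟨hjz.trans (List.length_filter_le _ _), ?_⟩
  by_contra hge
  have hdrop : (R.drop (j - 1)).filter (fun x => decide (x < z)) = [] := by
    refine List.filter_eq_nil_iff.2 fun x hx => ?_
    obtain ⟨i, hi, rfl⟩ := List.mem_drop_iff_getElem.1 hx
    have := getD_le_getD hR (show j - 1 ≤ j - 1 + i by omega) (by omega)
    rw [List.getD_eq_getElem _ _ (show j - 1 + i < R.length by omega)] at this
    simp only [decide_eq_true_eq]
    omega
  rw [← List.take_append_drop (j - 1) R, List.filter_append, hdrop, List.append_nil] at hjz
  have := (List.length_filter_le (fun x => decide (x < z)) (R.take (j - 1))).trans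
    (List.length_take_le _ _)
  omega

lemma pair_mem_zip {l₁ l₂ : List ℕ} {i : ℕ} (h₁ : i < l₁.length) (h₂ : i < l₂.length) :
    (l₁.getD i 0, l₂.getD i 0) ∈ l₁.zip l₂ := by
  rw [List.getD_eq_getElem _ _ h₁, List.getD_eq_getElem _ _ h₂, ← List.getElem_zip]
  exact List.getElem_mem (by simp; omega)

lemma mem_zip_reverse {l₁ l₂ : List ℕ} (h : l₁.length = l₂.length) {x : ℕ × ℕ} :
    x ∈ l₁.zip l₂.reverse ↔ x ∈ l₁.reverse.zip l₂ := by
  rw [← List.mem_reverse, List.zip_eq_zipWith, List.reverse_zipWith (by simp [h]),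
    List.reverse_reverse, ← List.zip_eq_zipWith]

end Lists

/-! ### One step on the first row -/

def insertPos (R : List ℕ) (q : Quad) : ℕ := (R.takeWhile fun y => decide (y < q.b)).length

def insertRow (R : List ℕ) (q : Quad) : List ℕ := insertAt R (insertPos R q) q.a ++ [q.d]

section FirstRow

variable {R : List ℕ} {q : Quad}

lemma insertPos_le_length (R : List ℕ) (q : Quad) : insertPos R q ≤ R.length :=
  (List.takeWhile_prefix _).length_le

lemma take_insertPos (R : List ℕ) (q : Quad) :
    R.take (insertPos R q) = R.takeWhile fun y => decide (y < q.b) :=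
  (List.prefix_iff_eq_take.1 (List.takeWhile_prefix _)).symm

lemma drop_insertPos (R : List ℕ) (q : Quad) :
    R.drop (insertPos R q) = R.dropWhile fun y => decide (y < q.b) := by
  have h := List.takeWhile_append_dropWhile (p := fun y => decide (y < q.b)) (l := R)
  rw [← take_insertPos] at h
  exact (List.append_cancel_left (h.trans (List.take_append_drop _ R).symm)).symm

lemma not_bumps_of_findIdx?_eq_none (h : R.findIdx? q.bumps = none) {x : ℕ} (hx : x ∈ R) :
    ¬ (q.a ≤ x ∧ x < q.b) := by
  rw [← Quad.bumps_iff, List.findIdx?_eq_none_iff.1 h x hx]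
  simp

lemma getD_lt_a_of_lt_insertPos (h : R.findIdx? q.bumps = none) {i : ℕ}
    (hi : i < insertPos R q) : R.getD i 0 < q.a := by
  have hlen := insertPos_le_length R q
  have hmem := getD_mem_take (R := R) hi (by omega)
  rw [take_insertPos] at hmem
  have hb : R.getD i 0 < q.b := by simpa using List.mem_takeWhile_imp hmem
  have := not_bumps_of_findIdx?_eq_none h (getD_mem (R := R) (i := i) (by omega))
  omega

lemma b_le_getD_of_insertPos_le (hR : R.Pairwise (· ≤ ·)) {i : ℕ} (hi : insertPos R q ≤ i)
    (hlen : i < R.length) : q.b ≤ R.getD i 0 := by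
  have hmem := getD_mem_drop hi hlen
  rw [drop_insertPos] at hmem
  exact le_of_mem_dropWhile hR q.b _ hmem

lemma le_insertPos (hR : R.Pairwise (· ≤ ·)) {m : ℕ} (hm : m ≤ R.length)
    (hlt : ∀ i < m, R.getD i 0 < q.b) : m ≤ insertPos R q := by
  by_contra hw
  have := b_le_getD_of_insertPos_le (q := q) hR le_rfl (by omega)
  have := hlt (insertPos R q) (by omega)
  omega

lemma insertPos_eq_length (hR : R.Pairwise (· ≤ ·)) (hle : ∀ x ∈ R, x < q.b) :
    insertPos R q = R.length :=
  le_antisymm (insertPos_le_length R q) (le_insertPos hR le_rfl fun _ hi => hle _ (getD_mem hi))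

lemma findIdx?_bumps_eq_some (hR : R.Pairwise (· ≤ ·)) {i : ℕ}
    (h : R.findIdx? q.bumps = some i) :
    i < R.length ∧ q.a ≤ R.getD i 0 ∧ R.getD i 0 < q.b ∧ ∀ j < i, R.getD j 0 < q.a := by
  obtain ⟨hi, hbump, hbefore⟩ := List.findIdx?_eq_some_iff_getElem.1 h
  rw [Quad.bumps_iff] at hbump
  rw [List.getD_eq_getElem _ _ hi]
  refine ⟨hi, hbump.1, hbump.2, fun j hj => ?_⟩
  have hj' := hbefore j hj
  rw [Quad.bumps_iff] at hj'
  have := getD_le_getD hR hj.le hi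
  rw [List.getD_eq_getElem _ _ (by omega), List.getD_eq_getElem _ _ hi] at *
  omega

lemma length_insertRow (R : List ℕ) (q : Quad) : (insertRow R q).length = R.length + 2 := by
  simp [insertRow, length_insertAt (insertPos_le_length R q)]

lemma getD_insertRow_of_lt {i : ℕ} (hi : i < insertPos R q) :
    (insertRow R q).getD i 0 = R.getD i 0 := by
  have hw := insertPos_le_length R q
  rw [insertRow, List.getD_append _ _ _ _ (by rw [length_insertAt hw]; omega),
    getD_insertAt_of_lt hi hw]

lemma getD_insertRow_insertPos : (insertRow R q).getD (insertPos R q) 0 = q.a := by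
  have hw := insertPos_le_length R q
  rw [insertRow, List.getD_append _ _ _ _ (by rw [length_insertAt hw]; omega),
    getD_insertAt_self hw]

lemma getD_insertRow_of_gt {i : ℕ} (hi : insertPos R q < i) (hlen : i ≤ R.length) :
    (insertRow R q).getD i 0 = R.getD (i - 1) 0 := by
  have hw := insertPos_le_length R q
  rw [insertRow, List.getD_append _ _ _ _ (by rw [length_insertAt hw]; omega),
    getD_insertAt_of_gt hi hw]

lemma getD_insertRow_last (R : List ℕ) (q : Quad) :
    (insertRow R q).getD (R.length + 1) 0 = q.d := by
  rw [insertRow, List.getD_append_right _ _ _ _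
    (by simp [length_insertAt (insertPos_le_length R q)])]
  simp [length_insertAt (insertPos_le_length R q)]

lemma take_insertRow (R : List ℕ) (q : Quad) :
    (insertRow R q).take (insertPos R q + 1) = R.take (insertPos R q) ++ [q.a] := by
  have hw := insertPos_le_length R q
  rw [insertRow, List.take_append_of_le_length (by rw [length_insertAt hw]; omega), insertAt,
    List.take_append, List.take_of_length_le (by simp)]
  simp [show min (insertPos R q) R.length = insertPos R q by omega]

lemma take_succ_length_insertRow (R : List ℕ) (q : Quad) :
    (insertRow R q).take (R.length + 1) = insertAt R (insertPos R q) q.a :=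
  List.take_left' (length_insertAt (insertPos_le_length R q) q.a)

lemma pairwise_insertRow (hR : R.Pairwise (· ≤ ·)) (h : R.findIdx? q.bumps = none)
    (hab : q.a < q.b) (had : q.a ≤ q.d) (hd : ∀ x ∈ R, x ≤ q.d) :
    (insertRow R q).Pairwise (· ≤ ·) := by
  have hsplit : insertAt R (insertPos R q) q.a = R.takeWhile (fun y => decide (y < q.b)) ++
      q.a :: R.dropWhile (fun y => decide (y < q.b)) := by
    rw [insertAt, take_insertPos, drop_insertPos]
  rw [insertRow, List.pairwise_append, hsplit]
  refine ⟨pairwise_le_append_cons (hR.sublist (List.takeWhile_sublist _))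
      (hR.sublist (List.dropWhile_sublist _)) (fun y hy => ?_)
      (fun y hy => (hab.trans_le (le_of_mem_dropWhile hR q.b y hy)).le),
    List.pairwise_singleton _ _, fun x hx y hy => ?_⟩
  · have hb : y < q.b := by simpa using List.mem_takeWhile_imp hy
    have := not_bumps_of_findIdx?_eq_none h ((List.takeWhile_sublist _).subset hy)
    omega
  · rw [List.mem_singleton.1 hy]
    rw [← hsplit, mem_insertAt] at hx
    exact hx.elim (· ▸ had) (hd x)

lemma pairwise_bumpRow (hR : R.Pairwise (· ≤ ·)) {i : ℕ} (h : R.findIdx? q.bumps = some i) :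
    (R.set i q.a).Pairwise (· ≤ ·) := by
  obtain ⟨hi, ha, -, hbefore⟩ := findIdx?_bumps_eq_some hR h
  rw [List.set_eq_take_append_cons_drop, if_pos hi]
  refine pairwise_le_append_cons (hR.sublist (List.take_sublist _ _))
    (hR.sublist (List.drop_sublist _ _)) (fun y hy => ?_) (fun y hy => ?_)
  · obtain ⟨j, hj, rfl⟩ := mem_take_iff_getD.1 hy
    exact (hbefore j (by omega)).le
  · obtain ⟨j, hj, rfl⟩ := mem_iff_getD.1 hy
    rw [List.length_drop] at hj
    rw [List.getD_eq_getElem _ _ (by simpa using hj), List.getElem_drop,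
      ← List.getD_eq_getElem _ 0 (by omega)]
    exact ha.trans (getD_le_getD hR (by omega) (by omega))

end FirstRow

/-! ### The first rows of OBRSK -/

def topStep (s : List ℕ × List ℕ) (q : Quad) : List ℕ × List ℕ :=
  match s.1.findIdx? q.bumps with
  | some i => (s.1.set i q.a, s.2.set (s.2.length - (i + 1)) q.c)
  | none => (insertRow s.1 q, q.b :: insertAt s.2 (s.2.length - insertPos s.1 q) q.c)

def topRows (L : List Quad) : List ℕ × List ℕ := L.foldl topStep ([], [])

lemma topRows_append_singleton (L : List Quad) (q : Quad) :
    topRows (L ++ [q]) = topStep (topRows L) q := by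
  simp [topRows, List.foldl_append]

lemma insertP_snd_ne_nil (b : ℕ) (rows : List (List ℕ)) (x : ℕ) : (insertP b rows x).2 ≠ [] := by
  cases rows with
  | nil => simp [insertP]
  | cons row rest =>
    rw [insertP]
    split <;> simp

lemma getD_zero_modifyRow_zero (r : List ℕ) (rs : List (List ℕ)) (f : List ℕ → List ℕ) :
    (modifyRow (r :: rs) 0 f).getD 0 [] = f r := rfl

lemma getD_zero_modifyRow_succ (rows : List (List ℕ)) (k : ℕ) (f : List ℕ → List ℕ) :
    (modifyRow rows (k + 1) f).getD 0 [] = rows.getD 0 [] := by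
  cases rows <;> simp [modifyRow]

lemma length_modifyRow (rows : List (List ℕ)) (k : ℕ) (f : List ℕ → List ℕ) :
    (modifyRow rows k f).length = rows.length := by
  rw [modifyRow]
  rcases h : rows.drop k with _ | ⟨r, rest⟩ <;> have hl := congrArg List.length h <;>
    simp only [List.length_drop, List.length_cons, List.length_nil] at hl <;> simp <;> omega

lemma obrskStep_heads (P Q : List (List ℕ)) (hPQ : P = [] ↔ Q = []) (q : Quad) :
    ((obrskStep (P, Q) q).1.getD 0 [], (obrskStep (P, Q) q).2.getD 0 []) =
      topStep (P.getD 0 [], Q.getD 0 []) q ∧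
    (obrskStep (P, Q) q).1 ≠ [] ∧ (obrskStep (P, Q) q).2 ≠ [] := by
  obtain ⟨a, b, c, d⟩ := q
  rcases P with _ | ⟨row, rest⟩ <;> rcases Q with _ | ⟨qr, qrest⟩
  · simp [obrskStep, insertP, insertQ, modifyRow, topStep, insertRow, insertPos, insertAt,
      Quad.a, Quad.b, Quad.c, Quad.d]
  · simp at hPQ
  · simp at hPQ
  have hb : Quad.bumps (a, b, c, d) = fun y => decide (a ≤ y ∧ y < b) := rfl
  rcases hfi : row.findIdx? (fun y => decide (a ≤ y ∧ y < b)) with _ | i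
  · have hP : insertP b (row :: rest) a = (insertAt row (insertPos row (a, b, c, d)) a :: rest,
        [insertPos row (a, b, c, d) + 1]) := by
      rw [insertP, insertRowP, hfi]; rfl
    simp only [obrskStep, hP, topStep, hb, hfi, List.length_singleton, Nat.sub_self,
      List.getD_cons_zero, insertQ]
    refine ⟨?_, by simp [modifyRow], by simp [modifyRow]⟩
    simp only [getD_zero_modifyRow_zero, insertRow, Quad.a, Quad.b, Quad.c, Quad.d,
      Prod.mk.injEq, true_and]
    rw [Nat.add_sub_add_right]
  · obtain ⟨js, hjs, hjs0⟩ : ∃ js, (insertP b rest (row.getD i 0)).2 = js ∧ js ≠ [] :=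
      ⟨_, rfl, insertP_snd_ne_nil _ _ _⟩
    obtain ⟨j, js', rfl⟩ := List.exists_cons_of_ne_nil hjs0
    have hP : insertP b (row :: rest) a =
        (row.set i a :: (insertP b rest (row.getD i 0)).1, (i + 1) :: j :: js') := by
      rw [insertP, insertRowP, hfi]; simp only [hjs]
    simp only [obrskStep, hP, topStep, hb, hfi, List.length_cons, Nat.add_sub_cancel,
      getD_zero_modifyRow_succ, List.getD_cons_zero, ne_eq, ← List.length_eq_zero_iff,
      length_modifyRow, insertQ]
    simp [Quad.a, Quad.c]

lemma foldl_obrskStep_heads (L : List Quad) (P Q : List (List ℕ)) (hPQ : P = [] ↔ Q = []) :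
    ((L.foldl obrskStep (P, Q)).1.getD 0 [], (L.foldl obrskStep (P, Q)).2.getD 0 []) =
      L.foldl topStep (P.getD 0 [], Q.getD 0 []) := by
  induction L generalizing P Q with
  | nil => rfl
  | cons q L ih =>
    obtain ⟨hstep, hP, hQ⟩ := obrskStep_heads P Q hPQ q
    rw [List.foldl_cons, List.foldl_cons, ← hstep]
    exact ih _ _ (iff_of_false hP hQ)

lemma OBRSKneg_heads {ρ : ArrayPair} (hρ : ρ.quads.length ≤ ρ.t) :
    ((OBRSKneg ρ).P.getD 0 [], (OBRSKneg ρ).Q.getD 0 []) = topRows ρ.quads := by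
  rw [← List.take_of_length_le hρ]
  exact foldl_obrskStep_heads _ [] [] Iff.rfl

/-! ### Columns of a negative skew-symmetric lexicographic pair -/

namespace Quad

def Admissible (q : Quad) : Prop := 0 < q.a ∧ q.a < q.b ∧ q.a < q.d ∧ q.b < q.c ∧ q.d < q.c

def LexGE (p q : Quad) : Prop := q.b ≤ p.b ∧ (q.b = p.b → q.a ≤ p.a)

def entryDuals (q : Quad) : List (ℕ × ℕ) := [(q.a, q.c), (q.b, q.d), (q.c, q.a), (q.d, q.b)]

end Quad

structure IsNegSkewLex (L : List Quad) : Prop where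
  admissible : ∀ q ∈ L, q.Admissible
  lex : L.Pairwise Quad.LexGE
  duality : DualityProp (L.flatMap Quad.entryDuals)

namespace IsNegSkewLex

variable {L : List Quad} {p q : Quad}

lemma sublist {M : List Quad} (h : IsNegSkewLex L) (hM : M.Sublist L) : IsNegSkewLex M where
  admissible r hr := h.admissible r (hM.subset hr)
  lex := h.lex.sublist hM
  duality x hx y hy := h.duality x ((hM.flatMap _).subset hx) y ((hM.flatMap _).subset hy)

lemma init (h : IsNegSkewLex (L ++ [q])) : IsNegSkewLex L :=
  h.sublist (List.sublist_append_left L [q])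

lemma lexGE_of_mem (h : IsNegSkewLex (L ++ [q])) (hp : p ∈ L) : p.LexGE q :=
  List.pairwise_append.1 h.lex |>.2.2 p hp q (List.mem_singleton_self q)

lemma dual (h : IsNegSkewLex L) (hp : p ∈ L) (hq : q ∈ L) {x y : ℕ × ℕ}
    (hx : x ∈ p.entryDuals) (hy : y ∈ q.entryDuals) :
    (x.1 ≤ y.1 → y.2 ≤ x.2) ∧ (x.1 < y.1 → y.2 < x.2) ∧ (x.1 = y.1 → x.2 = y.2) :=
  h.duality x (List.mem_flatMap.2 ⟨p, hp, hx⟩) y (List.mem_flatMap.2 ⟨q, hq, hy⟩)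

lemma d_le_of_b_le (h : IsNegSkewLex L) (hp : p ∈ L) (hq : q ∈ L) (hb : p.b ≤ q.b) :
    q.d ≤ p.d :=
  (h.dual hp hq (x := (p.b, p.d)) (y := (q.b, q.d)) (by simp [Quad.entryDuals])
    (by simp [Quad.entryDuals])).1 hb

lemma d_lt_of_b_lt (h : IsNegSkewLex L) (hp : p ∈ L) (hq : q ∈ L) (hb : p.b < q.b) :
    q.d < p.d :=
  (h.dual hp hq (x := (p.b, p.d)) (y := (q.b, q.d)) (by simp [Quad.entryDuals])
    (by simp [Quad.entryDuals])).2.1 hb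

lemma d_eq_of_b_eq (h : IsNegSkewLex L) (hp : p ∈ L) (hq : q ∈ L) (hb : p.b = q.b) :
    p.d = q.d :=
  (h.dual hp hq (x := (p.b, p.d)) (y := (q.b, q.d)) (by simp [Quad.entryDuals])
    (by simp [Quad.entryDuals])).2.2 hb

lemma c_eq_of_a_eq (h : IsNegSkewLex L) (hp : p ∈ L) (hq : q ∈ L) (ha : p.a = q.a) :
    p.c = q.c :=
  (h.dual hp hq (x := (p.a, p.c)) (y := (q.a, q.c)) (by simp [Quad.entryDuals])
    (by simp [Quad.entryDuals])).2.2 ha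

/-- If `q.a ≥ p.d`, duality gives `q.c ≤ p.b`, impossible since `p.b ≤ q.b < q.c`. -/
lemma a_lt_d_of_b_le (h : IsNegSkewLex L) (hp : p ∈ L) (hq : q ∈ L) (hb : p.b ≤ q.b) :
    q.a < p.d := by
  by_contra hda
  have := (h.dual hp hq (x := (p.d, p.b)) (y := (q.a, q.c)) (by simp [Quad.entryDuals])
    (by simp [Quad.entryDuals])).1 (not_lt.1 hda)
  have := (h.admissible q hq).2.2.2.1
  simp only at *
  omega

end IsNegSkewLex

structure TopRowsInv (L : List Quad) (s : List ℕ × List ℕ) : Prop where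
  sorted : s.1.Pairwise (· ≤ ·)
  mem_fst : ∀ x ∈ s.1, ∃ r ∈ L, x = r.a ∨ x = r.d
  mem_snd : ∀ x ∈ s.2, ∃ r ∈ L, x = r.b ∨ x = r.c
  length_snd : s.2.length = s.1.length
  even_length : Even s.1.length

namespace TopRowsInv

variable {L : List Quad} {q : Quad} {s : List ℕ × List ℕ}

lemma le_d (h : IsNegSkewLex (L ++ [q])) (inv : TopRowsInv L s) {x : ℕ} (hx : x ∈ s.1) :
    x ≤ q.d := by
  obtain ⟨r, hr, rfl | rfl⟩ := inv.mem_fst x hx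
  · exact (h.a_lt_d_of_b_le (by simp) (by simp [hr]) (h.lexGE_of_mem hr).1).le
  · exact h.d_le_of_b_le (by simp) (by simp [hr]) (h.lexGE_of_mem hr).1

lemma b_le (h : IsNegSkewLex (L ++ [q])) (inv : TopRowsInv L s) {x : ℕ} (hx : x ∈ s.2) :
    q.b ≤ x := by
  obtain ⟨r, hr, rfl | rfl⟩ := inv.mem_snd x hx
  · exact (h.lexGE_of_mem hr).1
  · exact (h.lexGE_of_mem hr).1.trans (h.admissible r (by simp [hr])).2.2.2.1.le

lemma step (h : IsNegSkewLex (L ++ [q])) (inv : TopRowsInv L s) :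
    TopRowsInv (L ++ [q]) (topStep s q) := by
  have hq := h.admissible q (by simp)
  have old {x : ℕ} {f g : Quad → ℕ} (hx : ∃ r ∈ L, x = f r ∨ x = g r) :
      ∃ r ∈ L ++ [q], x = f r ∨ x = g r := by
    obtain ⟨r, hr, hx⟩ := hx
    exact ⟨r, by simp [hr], hx⟩
  have new {x : ℕ} {f g : Quad → ℕ} (hx : x = f q ∨ x = g q) :
      ∃ r ∈ L ++ [q], x = f r ∨ x = g r := ⟨q, by simp, hx⟩
  rcases hfi : s.1.findIdx? q.bumps with _ | i
  · simp only [topStep, hfi]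
    refine ⟨pairwise_insertRow inv.sorted hfi hq.2.1 hq.2.2.1.le (fun x hx => inv.le_d h hx),
      fun x hx => ?_, fun x hx => ?_, ?_, ?_⟩
    · simp only [insertRow, List.mem_append, mem_insertAt, List.mem_singleton] at hx
      rcases hx with (rfl | hx) | rfl
      exacts [new (Or.inl rfl), old (inv.mem_fst x hx), new (Or.inr rfl)]
    · simp only [List.mem_cons, mem_insertAt] at hx
      rcases hx with rfl | rfl | hx
      exacts [new (Or.inl rfl), new (Or.inr rfl), old (inv.mem_snd x hx)]
    · rw [List.length_cons, length_insertAt (Nat.sub_le _ _), length_insertRow, inv.length_snd]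
    · simpa [length_insertRow, Nat.even_add_one] using inv.even_length
  · simp only [topStep, hfi]
    refine ⟨pairwise_bumpRow inv.sorted hfi, fun x hx => ?_, fun x hx => ?_, ?_, ?_⟩
    · rcases List.mem_or_eq_of_mem_set hx with hx | rfl
      exacts [old (inv.mem_fst x hx), new (Or.inl rfl)]
    · rcases List.mem_or_eq_of_mem_set hx with hx | rfl
      exacts [old (inv.mem_snd x hx), new (Or.inr rfl)]
    · simp [inv.length_snd]
    · simpa using inv.even_length

end TopRowsInv

lemma IsNegSkewLex.topRowsInv {L : List Quad} (h : IsNegSkewLex L) : TopRowsInv L (topRows L) := by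
  induction L using List.reverseRecOn with
  | nil => exact ⟨List.Pairwise.nil, by simp [topRows], by simp [topRows], rfl, Even.zero⟩
  | append_singleton L q ih =>
    rw [topRows_append_singleton]
    exact (ih h.init).step h

def topRow (L : List Quad) : List ℕ := (topRows L).1

section TopRow

variable {L : List Quad} {q : Quad}

lemma IsNegSkewLex.sorted_topRow (h : IsNegSkewLex L) : (topRow L).Pairwise (· ≤ ·) :=
  h.topRowsInv.sorted

lemma IsNegSkewLex.even_length_topRow (h : IsNegSkewLex L) : Even (topRow L).length :=
  h.topRowsInv.even_length

lemma topRow_append_of_none (h : (topRow L).findIdx? q.bumps = none) :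
    topRow (L ++ [q]) = insertRow (topRow L) q := by
  simp only [topRow, topRows_append_singleton, topStep] at h ⊢
  rw [h]

lemma topRow_append_of_some {i : ℕ} (h : (topRow L).findIdx? q.bumps = some i) :
    topRow (L ++ [q]) = (topRow L).set i q.a := by
  simp only [topRow, topRows_append_singleton, topStep] at h ⊢
  rw [h]

lemma getD_zero_snd_of_none (h : (topRow L).findIdx? q.bumps = none) :
    (topRows (L ++ [q])).2.getD 0 0 = q.b := by
  simp only [topRow, topRows_append_singleton, topStep] at h ⊢
  rw [h]
  rfl

lemma getD_zero_snd_of_some {i : ℕ} (h : (topRow L).findIdx? q.bumps = some i)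
    (hi : i + 1 < (topRows L).2.length) :
    (topRows (L ++ [q])).2.getD 0 0 = (topRows L).2.getD 0 0 := by
  simp only [topRow, topRows_append_singleton, topStep] at h ⊢
  rw [h]
  exact getD_set_ne (by omega) _

lemma b_le_getD_zero_snd (h : IsNegSkewLex (L ++ [q])) (hne : topRow L ≠ []) :
    q.b ≤ (topRows L).2.getD 0 0 := by
  have inv := h.init.topRowsInv
  have hlen : 0 < (topRows L).2.length := by
    rw [inv.length_snd]; exact List.length_pos_iff.2 hne
  exact inv.b_le h (getD_mem hlen)

end TopRow

def IsQuadChain (M : List Quad) : Prop := M.Pairwise fun p q => p.a < q.a ∧ q.b < p.b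

/-- Along a chain the `a`-values increase, so a later column never bumps the `a`-value of an
earlier one. -/
lemma a_mem_topRow {M : List Quad} (hM : IsQuadChain M) {p : Quad} (hp : p ∈ M) :
    p.a ∈ topRow M := by
  induction M using List.reverseRecOn with
  | nil => simp at hp
  | append_singleton M q ih =>
    have hlt : ∀ r ∈ M, r.a < q.a := fun r hr =>
      (List.pairwise_append.1 hM).2.2 r hr q (List.mem_singleton_self q) |>.1
    have ih' := fun hp => ih (hM.sublist (List.sublist_append_left M [q])) hp
    rcases hfi : (topRow M).findIdx? q.bumps with _ | i
    · rw [topRow_append_of_none hfi, insertRow, List.mem_append, mem_insertAt]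
      rcases List.mem_append.1 hp with hp | hp
      · exact Or.inl (Or.inr (ih' hp))
      · exact Or.inl (Or.inl (by rw [List.mem_singleton.1 hp]))
    obtain ⟨hi, hbump, -⟩ := List.findIdx?_eq_some_iff_getElem.1 hfi
    rw [Quad.bumps_iff, ← List.getD_eq_getElem _ 0] at hbump
    rw [topRow_append_of_some hfi]
    rcases List.mem_append.1 hp with hp | hp
    · obtain ⟨k, hk, hval⟩ := mem_iff_getD.1 (ih' hp)
      have hki : i ≠ k := by
        rintro rfl
        have := hlt p hp
        omega
      exact mem_iff_getD.2 ⟨k, by simpa using hk, by rw [getD_set_ne hki, hval]⟩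
    · rw [List.mem_singleton.1 hp]
      exact mem_iff_getD.2 ⟨i, by simpa using hi, getD_set_self hi _⟩

/-! ### Chains realizing the entries of the first row -/

/-- Beyond position `χ` the row of `M` ends with the `d`-box of its last column `r`, inserted
without bumping, and every other box there is at least `r.b`: a later column can bump only
that last box. -/
def OpenTail (M : List Quad) (χ : ℕ) : Prop :=
  ∃ τ r, M = τ ++ [r] ∧ (topRow τ).findIdx? r.bumps = none ∧
    ∀ i, χ ≤ i → i + 1 < (topRow M).length → r.b ≤ (topRow M).getD i 0

structure ChainWitness (L : List Quad) (j v : ℕ) (M : List Quad) (χ : ℕ) : Prop where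
  sublist : M.Sublist L
  chain : IsQuadChain M
  length_le : M.length ≤ j
  le_pos : j ≤ χ
  pos_le : χ ≤ (topRow M).length
  getD_pos : (topRow M).getD (χ - 1) 0 = v
  a_mem : ∀ p ∈ M, p.a ∈ (topRow M).take χ
  openTail : χ < (topRow M).length → OpenTail M χ

namespace ChainWitness

variable {L : List Quad} {j v : ℕ} {M : List Quad} {χ : ℕ}

lemma mono (W : ChainWitness L j v M χ) {L' : List Quad} (h : L.Sublist L') :
    ChainWitness L' j v M χ :=
  { W with sublist := W.sublist.trans h }

lemma sorted (W : ChainWitness L j v M χ) (hL : IsNegSkewLex L) :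
    (topRow M).Pairwise (· ≤ ·) :=
  (hL.sublist W.sublist).sorted_topRow

section Extend

variable {q : Quad} (h : IsNegSkewLex (L ++ [q])) (W : ChainWitness L j v M χ) (hv : v < q.a)
include h W hv

lemma getD_lt_a {i : ℕ} (hi : i < χ) : (topRow M).getD i 0 < q.a := by
  have := getD_le_getD (W.sorted h.init) (show i ≤ χ - 1 by omega) (by have := W.pos_le; omega)
  rw [W.getD_pos] at this
  omega

lemma a_lt_a {p : Quad} (hp : p ∈ M) : p.a < q.a := by
  obtain ⟨i, hi, hval⟩ := mem_take_iff_getD.1 (W.a_mem p hp)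
  exact hval ▸ W.getD_lt_a h hv (by omega)

lemma chain_append {N : List Quad} (hN : N.Sublist M) : IsQuadChain (N ++ [q]) := by
  refine List.pairwise_append.2 ⟨W.chain.sublist hN, List.pairwise_singleton _ _, ?_⟩
  intro p hp r hr
  rw [List.mem_singleton.1 hr]
  have ha := W.a_lt_a h hv (hN.subset hp)
  have hlex := h.lexGE_of_mem (W.sublist.subset (hN.subset hp))
  refine ⟨ha, lt_of_le_of_ne hlex.1 fun hb => ?_⟩
  have := hlex.2 hb
  omega

/-- Boxes left of `χ` are too small to be bumped by `q`, and those of the open tail other than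
the last one are too large. -/
lemma bump_last {i : ℕ} (hfi : (topRow M).findIdx? q.bumps = some i) :
    i + 1 = (topRow M).length ∧ χ ≤ i ∧ OpenTail M χ := by
  obtain ⟨hi, hai, hbi, -⟩ := findIdx?_bumps_eq_some (W.sorted h.init) hfi
  have hχi : χ ≤ i := by
    by_contra hlt
    have := W.getD_lt_a h hv (i := i) (by omega)
    omega
  have hopen := W.openTail (by omega)
  refine ⟨?_, hχi, hopen⟩
  obtain ⟨τ, r, rfl, -, htail⟩ := hopen
  by_contra hne
  have := htail i hχi (by omega)
  have := (h.lexGE_of_mem (W.sublist.subset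
    (List.mem_append_right τ (List.mem_singleton_self r)))).1
  omega

end Extend

end ChainWitness

section Constructions

variable {L N : List Quad} {q : Quad} {j : ℕ}

lemma chainWitness_insert_a (hL : IsNegSkewLex L) (hN : N.Sublist L)
    (hc : IsQuadChain (N ++ [q])) (hfi : (topRow N).findIdx? q.bumps = none)
    (hlen : N.length + 1 ≤ j) (hj : j ≤ insertPos (topRow N) q + 1)
    (ha : ∀ p ∈ N, p.a ∈ (topRow N).take (insertPos (topRow N) q)) :
    ChainWitness (L ++ [q]) j q.a (N ++ [q]) (insertPos (topRow N) q + 1) := by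
  have hw := insertPos_le_length (topRow N) q
  have hrow := topRow_append_of_none hfi
  refine ⟨hN.append (List.Sublist.refl [q]), hc, by simpa using hlen, hj, ?_, ?_, ?_, ?_⟩
  · rw [hrow, length_insertRow]; omega
  · rw [hrow, Nat.add_sub_cancel, getD_insertRow_insertPos]
  · intro p hp
    rw [hrow, take_insertRow]
    rcases List.mem_append.1 hp with hp | hp
    · exact List.mem_append_left _ (ha p hp)
    · simp [List.mem_singleton.1 hp]
  · intro hlt
    refine ⟨N, q, rfl, hfi, fun i hi hi' => ?_⟩
    rw [hrow, length_insertRow] at hi'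
    rw [hrow, getD_insertRow_of_gt (by omega) (by omega)]
    exact b_le_getD_of_insertPos_le (hL.sublist hN).sorted_topRow (by omega) (by omega)

lemma chainWitness_insert_d (hN : N.Sublist L) (hc : IsQuadChain (N ++ [q]))
    (hfi : (topRow N).findIdx? q.bumps = none) (hlen : N.length + 1 ≤ j)
    (hj : j ≤ (topRow N).length + 2) :
    ChainWitness (L ++ [q]) j q.d (N ++ [q]) ((topRow N).length + 2) := by
  have hrow := topRow_append_of_none hfi
  have hfull : (topRow (N ++ [q])).length = (topRow N).length + 2 := by
    rw [hrow, length_insertRow]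
  refine ⟨hN.append (List.Sublist.refl [q]), hc, by simpa using hlen, hj, hfull.ge, ?_,
    fun p hp => ?_, fun hlt => absurd hlt (by omega)⟩
  · rw [hrow, show (topRow N).length + 2 - 1 = (topRow N).length + 1 by omega,
      getD_insertRow_last]
  · rw [← hfull, List.take_length]
    exact a_mem_topRow hc hp

lemma chainWitness_bump (hN : N.Sublist L) (hc : IsQuadChain (N ++ [q])) {i : ℕ}
    (hfi : (topRow N).findIdx? q.bumps = some i) (hi : i + 1 = (topRow N).length)
    (hlen : N.length + 1 ≤ j) (hj : j ≤ (topRow N).length) :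
    ChainWitness (L ++ [q]) j q.a (N ++ [q]) (topRow N).length := by
  have hrow := topRow_append_of_some hfi
  have hfull : (topRow (N ++ [q])).length = (topRow N).length := by simp [hrow]
  refine ⟨hN.append (List.Sublist.refl [q]), hc, by simpa using hlen, hj, hfull.ge, ?_,
    fun p hp => ?_, fun hlt => absurd hlt (by omega)⟩
  · rw [hrow, ← hi, Nat.add_sub_cancel, getD_set_self (by omega)]
  · rw [← hfull, List.take_length]
    exact a_mem_topRow hc hp

end Constructions

section Extension

variable {L : List Quad} {q : Quad}

lemma exists_chainWitness_a (h : IsNegSkewLex (L ++ [q])) {j : ℕ} (hj : 1 ≤ j)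
    (hprev : 2 ≤ j → ∃ v M χ, v < q.a ∧ ChainWitness L (j - 1) v M χ) :
    ∃ M χ, ChainWitness (L ++ [q]) j q.a M χ := by
  rcases Nat.lt_or_ge j 2 with hj1 | hj2
  · exact ⟨_, _, chainWitness_insert_a h.init (List.nil_sublist L) (List.pairwise_singleton _ q)
      rfl (by simp; omega) (by simp [topRow, topRows, insertPos]; omega) (by simp)⟩
  obtain ⟨v, M, χ, hv, W⟩ := hprev hj2
  have hc := W.chain_append h hv (List.Sublist.refl M)
  have hM := W.length_le
  have hjχ := W.le_pos
  rcases hfi : (topRow M).findIdx? q.bumps with _ | i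
  · have hχ : χ ≤ insertPos (topRow M) q :=
      le_insertPos (W.sorted h.init) W.pos_le fun i hi =>
        (W.getD_lt_a h hv hi).trans (h.admissible q (by simp)).2.1
    exact ⟨_, _, chainWitness_insert_a h.init W.sublist hc hfi (by omega) (by omega)
      fun p hp => List.take_subset_take_left _ hχ (W.a_mem p hp)⟩
  · obtain ⟨hi, hχ, -⟩ := W.bump_last h hv hfi
    exact ⟨_, _, chainWitness_bump W.sublist hc hfi hi (by omega) (by omega)⟩

/-- If `q` bumps the last box of the chain's row, that box is the `d`-box of the chain's last
column; replacing that column by `q` gives a row that `q` does not bump. -/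
lemma exists_chainWitness_d (h : IsNegSkewLex (L ++ [q])) {n v : ℕ} {M : List Quad} {χ : ℕ}
    (W : ChainWitness L n v M χ) (hv : v < q.a) (hn : Even n) :
    ∃ M χ, ChainWitness (L ++ [q]) (n + 2) q.d M χ := by
  have hnχ := W.le_pos
  have hM := W.length_le
  rcases hfi : (topRow M).findIdx? q.bumps with _ | i
  · exact ⟨_, _, chainWitness_insert_d W.sublist (W.chain_append h hv (List.Sublist.refl M)) hfi
      (by omega) (by have := W.pos_le; omega)⟩
  obtain ⟨hi, hχi, τ, r, rfl, hfiτ, htail⟩ := W.bump_last h hv hfi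
  have hτ : τ.Sublist (τ ++ [r]) := List.sublist_append_left τ [r]
  have hrow := topRow_append_of_none hfiτ
  have hlen : (topRow (τ ++ [r])).length = (topRow τ).length + 2 := by
    rw [hrow, length_insertRow]
  have hfiq : (topRow τ).findIdx? q.bumps = none := by
    rw [List.findIdx?_eq_none_iff]
    intro x hx
    have hx' : x ∈ (topRow (τ ++ [r])).take ((topRow τ).length + 1) := by
      rw [hrow, take_succ_length_insertRow]
      exact mem_insertAt.2 (Or.inr hx)
    obtain ⟨k, hk, rfl⟩ := mem_take_iff_getD.1 hx'
    rw [Bool.eq_false_iff, ne_eq, Quad.bumps_iff]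
    rcases Nat.lt_or_ge k χ with hkχ | hkχ
    · have := W.getD_lt_a h hv hkχ
      omega
    · have := htail k hkχ (by omega)
      have := (h.lexGE_of_mem (W.sublist.subset (List.mem_append_right τ
        (List.mem_singleton_self r)))).1
      omega
  have hnτ : n ≤ (topRow τ).length := by
    obtain ⟨e, he⟩ := (h.init.sublist (hτ.trans W.sublist)).even_length_topRow
    obtain ⟨m, hm⟩ := hn
    omega
  exact ⟨_, _, chainWitness_insert_d (hτ.trans W.sublist) (W.chain_append h hv hτ) hfiq
    (by simp at hM; omega) (by omega)⟩

end Extension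

def HasChainWitnesses (L : List Quad) : Prop :=
  ∀ j, 1 ≤ j → j ≤ (topRow L).length → (topRow L).getD (j - 1) 0 < (topRows L).2.getD 0 0 →
    ∃ M χ, ChainWitness L j ((topRow L).getD (j - 1) 0) M χ

namespace HasChainWitnesses

variable {L : List Quad} {q : Quad}

lemma of_lt_a (h : IsNegSkewLex (L ++ [q])) (IH : HasChainWitnesses L) {j : ℕ} (hj : 1 ≤ j)
    (hjl : j ≤ (topRow L).length) (hv : (topRow L).getD (j - 1) 0 < q.a) :
    ∃ M χ, ChainWitness L j ((topRow L).getD (j - 1) 0) M χ :=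
  IH j hj hjl <| hv.trans <| (h.admissible q (by simp)).2.1.trans_le <|
    b_le_getD_zero_snd h (List.ne_nil_of_length_pos (by omega))

lemma insertRow_last (h : IsNegSkewLex (L ++ [q])) (IH : HasChainWitnesses L)
    (hfi : (topRow L).findIdx? q.bumps = none) (hdb : q.d < q.b) :
    ∃ M χ, ChainWitness (L ++ [q]) ((topRow L).length + 2) q.d M χ := by
  have hfull : insertPos (topRow L) q = (topRow L).length :=
    insertPos_eq_length h.init.sorted_topRow fun x hx => (h.init.topRowsInv.le_d h hx).trans_lt hdb
  rcases Nat.eq_zero_or_pos (topRow L).length with h0 | hpos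
  · exact ⟨_, _, chainWitness_insert_d (j := (topRow L).length + 2) (List.nil_sublist L)
      (List.pairwise_singleton _ q) rfl (by simp) (by rw [h0]; exact le_rfl)⟩
  have hv := getD_lt_a_of_lt_insertPos hfi
    (show (topRow L).length - 1 < insertPos (topRow L) q by omega)
  obtain ⟨M, χ, W⟩ := of_lt_a h IH (j := (topRow L).length) (by omega) le_rfl hv
  exact exists_chainWitness_d h W hv h.init.even_length_topRow

lemma append_of_none (h : IsNegSkewLex (L ++ [q])) (IH : HasChainWitnesses L)
    (hfi : (topRow L).findIdx? q.bumps = none) : HasChainWitnesses (L ++ [q]) := by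
  intro j hj hjl hjq
  have hw := insertPos_le_length (topRow L) q
  rw [getD_zero_snd_of_none hfi] at hjq
  rw [topRow_append_of_none hfi] at hjl hjq ⊢
  rw [length_insertRow] at hjl
  rcases lt_trichotomy (j - 1) (insertPos (topRow L) q) with hlt | heq | hgt
  · rw [getD_insertRow_of_lt hlt] at hjq ⊢
    obtain ⟨M, χ, W⟩ := of_lt_a h IH hj (by omega) (getD_lt_a_of_lt_insertPos hfi hlt)
    exact ⟨M, χ, W.mono (List.sublist_append_left L [q])⟩
  · rw [heq, getD_insertRow_insertPos]
    refine exists_chainWitness_a h hj fun hj2 => ?_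
    have hv := getD_lt_a_of_lt_insertPos hfi (show j - 1 - 1 < insertPos (topRow L) q by omega)
    obtain ⟨M, χ, W⟩ := of_lt_a h IH (by omega) (by omega) hv
    exact ⟨_, M, χ, hv, W⟩
  · rcases Nat.lt_or_ge (j - 1) ((topRow L).length + 1) with hin | hlast
    · rw [getD_insertRow_of_gt hgt (by omega)] at hjq
      have := b_le_getD_of_insertPos_le h.init.sorted_topRow
        (show insertPos (topRow L) q ≤ j - 1 - 1 by omega) (by omega)
      omega
    · rw [show j - 1 = (topRow L).length + 1 by omega, getD_insertRow_last] at hjq ⊢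
      rw [show j = (topRow L).length + 2 by omega]
      exact insertRow_last h IH hfi hjq

lemma append_of_some (h : IsNegSkewLex (L ++ [q])) (IH : HasChainWitnesses L) {i : ℕ}
    (hfi : (topRow L).findIdx? q.bumps = some i) : HasChainWitnesses (L ++ [q]) := by
  intro j hj hjl hjq
  obtain ⟨hi, -, -, hbefore⟩ := findIdx?_bumps_eq_some h.init.sorted_topRow hfi
  rw [topRow_append_of_some hfi] at hjl hjq ⊢
  rw [List.length_set] at hjl
  rcases lt_trichotomy (j - 1) i with hlt | heq | hgt
  · rw [getD_set_ne (by omega)] at hjq ⊢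
    obtain ⟨M, χ, W⟩ := of_lt_a h IH hj hjl (hbefore _ hlt)
    exact ⟨M, χ, W.mono (List.sublist_append_left L [q])⟩
  · rw [heq, getD_set_self hi]
    refine exists_chainWitness_a h hj fun hj2 => ?_
    have hv := hbefore (j - 1 - 1) (by omega)
    obtain ⟨M, χ, W⟩ := of_lt_a h IH (by omega) (by omega) hv
    exact ⟨_, M, χ, hv, W⟩
  · have hlen : (topRows L).2.length = (topRow L).length := h.init.topRowsInv.length_snd
    rw [getD_set_ne (by omega)] at hjq ⊢
    rw [getD_zero_snd_of_some hfi (by omega)] at hjq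
    obtain ⟨M, χ, W⟩ := IH j hj hjl hjq
    exact ⟨M, χ, W.mono (List.sublist_append_left L [q])⟩

end HasChainWitnesses

lemma IsNegSkewLex.hasChainWitnesses {L : List Quad} (h : IsNegSkewLex L) :
    HasChainWitnesses L := by
  induction L using List.reverseRecOn with
  | nil => intro j hj hjl; simp [topRow, topRows] at hjl; omega
  | append_singleton L q ih =>
    rcases hfi : (topRow L).findIdx? q.bumps with _ | i
    · exact HasChainWitnesses.append_of_none h (ih h.init) hfi
    · exact HasChainWitnesses.append_of_some h (ih h.init) hfi

/-! ### Back to pairs of arrays -/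

namespace ArrayPair

variable {π ρ : ArrayPair} {k : ℕ}

lemma length_quads (hρ : ρ.eqLen) : ρ.quads.length = ρ.t := by
  obtain ⟨ha, hc, hd⟩ := hρ
  simp [quads, ha, hc, hd, t]

lemma getElem_quads (hρ : ρ.eqLen) {i : ℕ} (hi : i < ρ.quads.length) :
    ρ.quads[i] = (ρ.a.getD i 0, ρ.b.getD i 0, ρ.c.reverse.getD i 0, ρ.d.reverse.getD i 0) := by
  obtain ⟨ha, hc, hd⟩ := hρ
  rw [length_quads ⟨ha, hc, hd⟩] at hi
  simp [quads, List.getElem_zip, List.getD_eq_getElem?_getD, ha, hc, hd, hi,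
    show i < ρ.b.length from hi]

lemma exists_eq_of_mem_quads (hρ : ρ.eqLen) {q : Quad} (hq : q ∈ ρ.quads) :
    ∃ i < ρ.t, q = (ρ.a.getD i 0, ρ.b.getD i 0, ρ.c.reverse.getD i 0, ρ.d.reverse.getD i 0) := by
  obtain ⟨i, hi, rfl⟩ := List.getElem_of_mem hq
  exact ⟨i, length_quads hρ ▸ hi, getElem_quads hρ hi⟩

lemma ab_mem_zip (hρ : ρ.eqLen) {q : Quad} (hq : q ∈ ρ.quads) : (q.a, q.b) ∈ ρ.a.zip ρ.b := by
  obtain ⟨i, hi, rfl⟩ := exists_eq_of_mem_quads hρ hq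
  exact pair_mem_zip (by have := hρ.1; omega) hi

lemma dc_mem_zip (hρ : ρ.eqLen) {q : Quad} (hq : q ∈ ρ.quads) : (q.d, q.c) ∈ ρ.d.zip ρ.c := by
  obtain ⟨i, hi, rfl⟩ := exists_eq_of_mem_quads hρ hq
  have := (mem_zip_reverse (l₁ := ρ.d.reverse) (l₂ := ρ.c) (by simp [hρ.2.1, hρ.2.2])).1
    (pair_mem_zip (l₁ := ρ.d.reverse) (l₂ := ρ.c.reverse) (by simp [hρ.2.2]; omega)
      (by simp [hρ.2.1]; omega))
  rwa [List.reverse_reverse] at this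

lemma mem_entryDual_of_mem_flatMap (hρ : ρ.eqLen) {x : ℕ × ℕ}
    (hx : x ∈ ρ.quads.flatMap Quad.entryDuals) : x ∈ ρ.entryDual := by
  obtain ⟨ha, hc, hd⟩ := hρ
  have hb : ρ.b.length = ρ.t := rfl
  obtain ⟨q, hq, hx⟩ := List.mem_flatMap.1 hx
  obtain ⟨i, hi, rfl⟩ := exists_eq_of_mem_quads ⟨ha, hc, hd⟩ hq
  simp only [Quad.entryDuals, Quad.a, Quad.b, Quad.c, Quad.d, List.mem_cons,
    List.not_mem_nil, or_false] at hx
  simp only [entryDual, List.mem_append]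
  rcases hx with rfl | rfl | rfl | rfl
  · exact Or.inl (Or.inl (Or.inl
      (pair_mem_zip (l₁ := ρ.a) (l₂ := ρ.c.reverse) (by omega) (by simp; omega))))
  · exact Or.inl (Or.inl (Or.inr
      (pair_mem_zip (l₁ := ρ.b) (l₂ := ρ.d.reverse) (by omega) (by simp; omega))))
  · exact Or.inl (Or.inr ((mem_zip_reverse (l₁ := ρ.c) (l₂ := ρ.a) (by omega)).2
      (pair_mem_zip (by simp; omega) (by omega))))
  · exact Or.inr ((mem_zip_reverse (l₁ := ρ.d) (l₂ := ρ.b) (by omega)).2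
      (pair_mem_zip (by simp; omega) (by omega)))

/-- The column found by `findIdx` may be another copy of `p`'s column; by duality its dual
column is still that of `p`. -/
lemma dualColumn_eq (hρ : ρ.eqLen) (h : IsNegSkewLex ρ.quads) {p : Quad} (hp : p ∈ ρ.quads) :
    (ρ.c.getD (ρ.t - 1 - (ρ.b.zip ρ.a).findIdx (fun x => x == (p.b, p.a))) 0,
      ρ.d.getD (ρ.t - 1 - (ρ.b.zip ρ.a).findIdx (fun x => x == (p.b, p.a))) 0) = (p.c, p.d) := by
  obtain ⟨ha, hc, hd⟩ := hρ
  have hb : ρ.b.length = ρ.t := rfl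
  obtain ⟨i, hi, hpi⟩ := exists_eq_of_mem_quads ⟨ha, hc, hd⟩ hp
  have hmem : (p.b, p.a) ∈ ρ.b.zip ρ.a := by
    rw [hpi]; exact pair_mem_zip (by omega) (by omega)
  have hF := List.findIdx_lt_length_of_exists (p := fun x => x == (p.b, p.a)) ⟨_, hmem, by simp⟩
  set F := (ρ.b.zip ρ.a).findIdx (fun x => x == (p.b, p.a))
  have hFeq : (ρ.b.zip ρ.a)[F] = (p.b, p.a) := by
    simpa using List.findIdx_getElem (w := hF)
  rw [List.getElem_zip, Prod.mk.injEq] at hFeq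
  have hFt : F < ρ.t := by simp at hF; omega
  have hFq : F < ρ.quads.length := by rw [length_quads ⟨ha, hc, hd⟩]; exact hFt
  have hr := List.getElem_mem hFq
  have hrF := getElem_quads ⟨ha, hc, hd⟩ hFq
  have hca := h.c_eq_of_a_eq hr hp (by
    rw [hrF, ← hFeq.2]; exact List.getD_eq_getElem _ _ (by omega))
  have hdb := h.d_eq_of_b_eq hr hp (by
    rw [hrF, ← hFeq.1]; exact List.getD_eq_getElem _ _ (by omega))
  rw [hrF] at hca hdb
  simp only [Quad.c, Quad.d] at hca hdb
  rw [List.getD_reverse _ (by omega), hc] at hca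
  rw [List.getD_reverse _ (by omega), hd] at hdb
  rw [hca, hdb]
  rfl

lemma t_prefixPair (hk : k ≤ π.t) : (π.prefixPair k).t = k := by
  simpa [prefixPair, t] using hk

lemma eqLen_prefixPair (hπ : π.eqLen) (hk : k ≤ π.t) : (π.prefixPair k).eqLen := by
  obtain ⟨ha, hc, hd⟩ := hπ
  simp only [eqLen, t_prefixPair hk]
  simp [prefixPair, ha, hc, hd, hk]
  omega

lemma quads_prefixPair (hπ : π.eqLen) (hk : k ≤ π.t) :
    (π.prefixPair k).quads = π.quads.take k := by
  obtain ⟨ha, hc, hd⟩ := hπ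
  have hk' : π.t - (π.t - k) = k := by omega
  simp [quads, prefixPair, List.reverse_drop, hc, hd, hk', List.zip_eq_zipWith, List.take_zipWith]

end ArrayPair

lemma getD_zero_P_OBRSKneg {ρ : ArrayPair} (hρ : ρ.eqLen) :
    (OBRSKneg ρ).P.getD 0 [] = topRow ρ.quads :=
  congrArg Prod.fst (OBRSKneg_heads (ArrayPair.length_quads hρ).le)

lemma getD_zero_Q_OBRSKneg {ρ : ArrayPair} (hρ : ρ.eqLen) :
    (OBRSKneg ρ).Q.getD 0 [] = (topRows ρ.quads).2 :=
  congrArg Prod.snd (OBRSKneg_heads (ArrayPair.length_quads hρ).le)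

lemma LexTwoRow.getD_le {top bot : List ℕ} (h : LexTwoRow top bot) {i i' : ℕ} (hii' : i ≤ i')
    (hi' : i' < top.length) :
    top.getD i' 0 ≤ top.getD i 0 ∧
      (top.getD i' 0 = top.getD i 0 → bot.getD i' 0 ≤ bot.getD i 0) := by
  induction i', hii' using Nat.le_induction with
  | base => exact ⟨le_rfl, fun _ => le_rfl⟩
  | succ n hin ih =>
    obtain ⟨ih₁, ih₂⟩ := ih (by omega)
    obtain ⟨h₁, h₂⟩ := h n hi'
    exact ⟨h₁.trans ih₁, fun heq => (h₂ (by omega)).trans (ih₂ (by omega))⟩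

lemma lexTwoRow_of_pairwise_gt {top bot : List ℕ} (h : top.Pairwise (· > ·)) :
    LexTwoRow top bot := by
  intro k hk
  have hlt := List.pairwise_iff_getElem.1 h k (k + 1) (by omega) hk (by omega)
  rw [List.getD_eq_getElem _ _ hk, List.getD_eq_getElem _ _ (by omega)]
  exact ⟨hlt.le, fun heq => absurd heq hlt.ne⟩

lemma isNegSkewLex_quads {π : ArrayPair} (hlex : π.SkewSymmLex) (hneg : π.Negative) :
    IsNegSkewLex π.quads := by
  obtain ⟨hπ, hpos, hba, -, had, hbc, hdual, hsign⟩ := hlex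
  obtain ⟨ha, hc, hd⟩ := hπ
  refine ⟨fun q hq => ?_, ?_, fun x hx y hy => hdual x
    (ArrayPair.mem_entryDual_of_mem_flatMap ⟨ha, hc, hd⟩ hx) y
    (ArrayPair.mem_entryDual_of_mem_flatMap ⟨ha, hc, hd⟩ hy)⟩
  · obtain ⟨i, hi, rfl⟩ := ArrayPair.exists_eq_of_mem_quads ⟨ha, hc, hd⟩ hq
    have hab : π.a.getD i 0 < π.b.getD i 0 := hneg _ (pair_mem_zip (by omega) hi)
    have hmem : π.a.getD i 0 ∈ π.a ++ π.b ++ π.c ++ π.d :=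
      List.mem_append_left _ <| List.mem_append_left _ <| List.mem_append_left _ <|
        getD_mem (by omega)
    refine ⟨hpos _ hmem, hab, had _ (pair_mem_zip (by omega) (by simp; omega)),
      hbc _ (pair_mem_zip hi (by simp; omega)), ?_⟩
    simp only [Quad.c, Quad.d]
    rw [List.getD_reverse _ (by omega), List.getD_reverse _ (by omega), hc, hd]
    exact (hsign i hi).1 hab
  · rw [List.pairwise_iff_getElem]
    intro i j hi hj hij
    rw [ArrayPair.getElem_quads ⟨ha, hc, hd⟩, ArrayPair.getElem_quads ⟨ha, hc, hd⟩]
    rw [ArrayPair.length_quads ⟨ha, hc, hd⟩] at hj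
    exact hba.getD_le hij.le hj

def chainPair (M : List Quad) : ArrayPair :=
  ⟨M.map Quad.a, M.map Quad.b, (M.map Quad.c).reverse, (M.map Quad.d).reverse⟩

section ChainPair

variable {M : List Quad}

lemma t_chainPair : (chainPair M).t = M.length := by
  simp [chainPair, ArrayPair.t]

lemma eqLen_chainPair : (chainPair M).eqLen := by
  simp [ArrayPair.eqLen, chainPair, ArrayPair.t]

lemma quads_chainPair : (chainPair M).quads = M := by
  simp [ArrayPair.quads, chainPair, List.zip_map', Quad.a, Quad.b, Quad.c, Quad.d]

lemma getD_map_eq_getElem {f : Quad → ℕ} {i : ℕ} (hi : i < M.length) :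
    (M.map f).getD i 0 = f M[i] := by
  rw [List.getD_eq_getElem _ _ (by simpa using hi), List.getElem_map]

lemma getD_reverse_map {f : Quad → ℕ} {i : ℕ} (hi : i < M.length) :
    (M.map f).reverse.getD (M.length - 1 - i) 0 = f M[i] := by
  rw [List.getD_reverse _ (by simp; omega), List.getD_eq_getElem _ _ (by simp; omega)]
  simp [show M.length - 1 - (M.length - 1 - i) = i by omega]

lemma mem_flatMap_of_mem_entryDual_chainPair {x : ℕ × ℕ} (hx : x ∈ (chainPair M).entryDual) :
    x ∈ M.flatMap Quad.entryDuals := by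
  simp only [ArrayPair.entryDual, chainPair, List.reverse_reverse, List.mem_append] at hx
  rw [List.mem_flatMap]
  rcases hx with ((hx | hx) | hx) | hx
  on_goal 3 => rw [mem_zip_reverse (by simp), List.reverse_reverse] at hx
  on_goal 4 => rw [mem_zip_reverse (by simp), List.reverse_reverse] at hx
  all_goals
    rw [List.zip_map'] at hx
    obtain ⟨p, hp, rfl⟩ := List.mem_map.1 hx
    exact ⟨p, hp, by simp [Quad.entryDuals]⟩

lemma skewSymmLex_chainPair (h : IsNegSkewLex M) (hc : IsQuadChain M) :
    (chainPair M).SkewSymmLex := by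
  have hd : (M.map Quad.d).Pairwise (· < ·) := List.pairwise_map.2 <|
    hc.imp_of_mem fun hp hq hpq => h.d_lt_of_b_lt hq hp hpq.2
  refine ⟨eqLen_chainPair, ?_, lexTwoRow_of_pairwise_gt (List.pairwise_map.2 (hc.imp (·.2))),
    lexTwoRow_of_pairwise_gt (List.pairwise_reverse.2 hd), ?_, ?_,
    fun x hx y hy => h.duality x (mem_flatMap_of_mem_entryDual_chainPair hx) y
      (mem_flatMap_of_mem_entryDual_chainPair hy), fun i hi => ?_⟩
  · simp only [chainPair, List.mem_append, List.mem_reverse, List.mem_map]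
    rintro x (((⟨p, hp, rfl⟩ | ⟨p, hp, rfl⟩) | ⟨p, hp, rfl⟩) | ⟨p, hp, rfl⟩) <;>
      · have := h.admissible p hp
        simp only [Quad.Admissible] at this
        omega
  · simp only [chainPair, List.reverse_reverse, List.zip_map', List.mem_map]
    rintro _ ⟨p, hp, rfl⟩
    exact (h.admissible p hp).2.2.1
  · simp only [chainPair, List.reverse_reverse, List.zip_map', List.mem_map]
    rintro _ ⟨p, hp, rfl⟩
    exact (h.admissible p hp).2.2.2.1
  · rw [t_chainPair] at hi
    have hp := h.admissible _ (List.getElem_mem hi)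
    dsimp only [chainPair, ArrayPair.t]
    rw [List.length_map, getD_reverse_map hi, getD_reverse_map hi, getD_map_eq_getElem hi,
      getD_map_eq_getElem hi]
    exact ⟨fun _ => hp.2.2.2.2, fun hba => absurd hba hp.2.1.not_gt⟩

lemma dualChainIn_chainPair {ρ : ArrayPair} (hρ : ρ.eqLen) (h : IsNegSkewLex ρ.quads)
    (hM : M.Sublist ρ.quads) (hc : IsQuadChain M) : DualChainIn ρ (chainPair M) := by
  refine ⟨⟨skewSymmLex_chainPair (h.sublist hM) hc, (List.pairwise_map.2 (hc.imp (·.1))).isChain,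
    (List.pairwise_map.2 (hc.imp (·.2))).isChain⟩, ?_, ?_, fun i hi => ?_⟩
  · simp only [chainPair, List.zip_map', List.mem_map]
    rintro _ ⟨p, hp, rfl⟩
    exact ArrayPair.ab_mem_zip hρ (hM.subset hp)
  · intro x hx
    simp only [chainPair] at hx
    rw [mem_zip_reverse (by simp), List.reverse_reverse, List.zip_map'] at hx
    obtain ⟨p, hp, rfl⟩ := List.mem_map.1 hx
    exact ArrayPair.dc_mem_zip hρ (hM.subset hp)
  · rw [t_chainPair] at hi
    dsimp only [chainPair, ArrayPair.t] at hi ⊢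
    rw [List.length_map, getD_reverse_map hi, getD_reverse_map hi, getD_map_eq_getElem hi,
      getD_map_eq_getElem hi]
    exact ArrayPair.dualColumn_eq hρ h (hM.subset (List.getElem_mem hi))

lemma getD_zero_P_OBRSKneg_chainPair : (OBRSKneg (chainPair M)).P.getD 0 [] = topRow M := by
  rw [getD_zero_P_OBRSKneg eqLen_chainPair, quads_chainPair]

end ChainPair

end OBRSKPaper

open OBRSKPaper

theorem stmt12_general (π : ArrayPair) (hlex : π.SkewSymmLex) (hneg : π.Negative)
    (k : ℕ) (hk2 : k ≤ π.t)
    (j : ℕ) (hj1 : 1 ≤ j)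
    (hjm : j ≤ (((OBRSKneg (π.prefixPair k)).P.getD 0 []).filter
        (fun x => decide (x < ((OBRSKneg (π.prefixPair k)).Q.getD 0 []).getD 0 0))).length) :
    ∃ σ : ArrayPair, DualChainIn (π.prefixPair k) σ ∧ σ.t ≤ j ∧
      ∃ χ : ℕ, j ≤ χ ∧
        ((OBRSKneg σ).P.getD 0 []).getD (χ - 1) 0
          = ((OBRSKneg (π.prefixPair k)).P.getD 0 []).getD (j - 1) 0 ∧
        ∀ x ∈ σ.a, x ∈ ((OBRSKneg σ).P.getD 0 []).take χ := by
  have hρ := ArrayPair.eqLen_prefixPair hlex.1 hk2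
  have hL : IsNegSkewLex (π.prefixPair k).quads := by
    rw [ArrayPair.quads_prefixPair hlex.1 hk2]
    exact (isNegSkewLex_quads hlex hneg).sublist (List.take_sublist _ _)
  rw [getD_zero_P_OBRSKneg hρ, getD_zero_Q_OBRSKneg hρ] at hjm
  rw [getD_zero_P_OBRSKneg hρ]
  obtain ⟨hjl, hjq⟩ := getD_lt_of_le_length_filter hL.sorted_topRow hj1 hjm
  obtain ⟨M, χ, W⟩ := hL.hasChainWitnesses j hj1 hjl hjq
  refine ⟨chainPair M, dualChainIn_chainPair hρ hL W.sublist W.chain,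
    t_chainPair ▸ W.length_le, χ, W.le_pos, ?_⟩
  rw [getD_zero_P_OBRSKneg_chainPair]
  refine ⟨W.getD_pos, ?_⟩
  simp only [chainPair, List.mem_map]
  rintro _ ⟨p, hp, rfl⟩
  exact W.a_mem p hp

/-- With `{U1,U2}` a pair of negative skew-symmetric multisets on ℕ²
(represented via ψ by `π`), `(P^(k),Q^(k)) := OBRSK(ψ⁻¹({U1^(k),U2^(k)}))`,
`p^(k)_1 < ⋯` and `q^(k)_1 < ⋯` the top rows of `P^(k)`, `Q^(k)`, and
`m(k) := #{m : p^(k)_m < q^(k)_1}` : for every `1 ≤ j ≤ m(k)` there exist a dual pair of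
chains `{C1,C2}` in `{U1^(k),U2^(k)}` with at most `j` elements in each chain, and an
integer `χ ≥ j`, such that the first coordinate of the `χ`-th element (in increasing order
of first coordinates) of `OBRSK(ψ⁻¹({C1,C2}))^up` equals `p^(k)_j`, and every first
coordinate of an element of `C1` occurs among the first coordinates of the first `χ`
elements of `OBRSK(ψ⁻¹({C1,C2}))^up`. -/
theorem stmt12 (π : ArrayPair) (hlex : π.SkewSymmLex) (hneg : π.Negative)
    (k : ℕ) (hk1 : 1 ≤ k) (hk2 : k ≤ π.t)
    (j : ℕ) (hj1 : 1 ≤ j)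
    (hjm : j ≤ (((OBRSKneg (π.prefixPair k)).P.getD 0 []).filter
        (fun x => decide (x < ((OBRSKneg (π.prefixPair k)).Q.getD 0 []).getD 0 0))).length) :
    ∃ σ : ArrayPair, DualChainIn (π.prefixPair k) σ ∧ σ.t ≤ j ∧
      ∃ χ : ℕ, j ≤ χ ∧
        ((OBRSKneg σ).P.getD 0 []).getD (χ - 1) 0
          = ((OBRSKneg (π.prefixPair k)).P.getD 0 []).getD (j - 1) 0 ∧
        ∀ x ∈ σ.a, x ∈ ((OBRSKneg σ).P.getD 0 []).take χ :=
  stmt12_general π hlex hneg k hk2 j hj1 hjm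
end

section
/- Let d be a positive integer and β ∈ Ĩ(d). Then the map (R,S) ↦ R ∪̇ (β ∖ S) is a bijection from I_β(Skew-symm) onto Ĩ(d), with inverse map θ ↦ (θ ∖ β, β ∖ θ); moreover the pair (∅,∅) maps to β. -/
open OBRSKPaper

/-!
Write `k* = 2d+1-k`. Since `β` meets every pair `{k, k*}` exactly once, its complement in
`{1, …, 2d}` is `β*`, and the pairing condition `r_i + s_{2l+1-i} = 2d+1` on sorted lists says
exactly that `R = S*`. So the map sends `(S*, S)` with `S ⊆ β` to the set obtained from `β` by
replacing `S` by its mirror image `S*`, which again meets every pair once. Conversely, for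
`θ ∈ Ĩ(d)` one has `θ ∖ β = (β ∖ θ)*`, so `θ` arises from `S = β ∖ θ`. Flipping `S` changes the
number of elements exceeding `d` by `#S - 2 #{s ∈ S | d < s}`, so the parity condition on the
image is exactly the evenness of `#S`.
-/

theorem Finset.sort_image_of_strictAntiOn {α β : Type*} [LinearOrder α] [LinearOrder β]
    [DecidableEq β] {f : α → β} {s : Finset α} (hf : StrictAntiOn f s) :
    (s.image f).sort (· ≤ ·) = ((s.sort (· ≤ ·)).map f).reverse := by
  refine List.Perm.eq_of_pairwise' (Finset.pairwise_sort _ _) ?_ ?_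
  · rw [List.pairwise_reverse, List.pairwise_map]
    exact (Finset.pairwise_sort s _).imp_of_mem fun ha hb hab =>
      hf.antitoneOn ((Finset.mem_sort _).mp ha) ((Finset.mem_sort _).mp hb) hab
  · rw [← Multiset.coe_eq_coe, Finset.sort_eq, Finset.image_val_of_injOn hf.injOn,
      Multiset.coe_reverse, ← Multiset.map_coe, Finset.sort_eq]

theorem List.forall_getD_add_getD_reverse_iff {m n : ℕ} {l₁ l₂ : List ℕ}
    (h₁ : l₁.length = n) (h₂ : l₂.length = n) (hl₂ : ∀ x ∈ l₂, x ≤ m) :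
    (∀ i < n, l₁.getD i 0 + l₂.getD (n - 1 - i) 0 = m) ↔ l₁ = (l₂.map (m - ·)).reverse := by
  rw [List.ext_getElem_iff]
  simp only [List.length_reverse, List.length_map, h₁, h₂, true_and]
  refine forall_congr' fun i => forall_congr' fun hi => ?_
  have hx := hl₂ (l₂[n - 1 - i]'(by omega)) (List.getElem_mem _)
  simp only [List.getElem_reverse, List.getElem_map, List.length_map, h₂,
    List.getD_eq_getElem _ _ (h₁ ▸ hi : i < l₁.length),
    List.getD_eq_getElem _ _ (by omega : n - 1 - i < l₂.length)]
  exact ⟨fun h _ => by omega, fun h => by have := h hi; omega⟩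

theorem Nat.strictAntiOn_sub_Iic (m : ℕ) : StrictAntiOn (m - ·) (Set.Iic m) :=
  fun a _ b hb hab => by simp only [Set.mem_Iic] at hb; show m - b < m - a; omega

theorem Finset.forall_sort_getD_add_eq_iff {m : ℕ} {R S : Finset ℕ} (hS : ∀ s ∈ S, s ≤ m)
    (hc : R.card = S.card) :
    (∀ i < R.card, (R.sort (· ≤ ·)).getD i 0 + (S.sort (· ≤ ·)).getD (R.card - 1 - i) 0 = m) ↔
      R = S.image (m - ·) := by
  rw [List.forall_getD_add_getD_reverse_iff (Finset.length_sort (· ≤ ·))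
      (by rw [Finset.length_sort (· ≤ ·), hc]) fun s hs => hS s ((Finset.mem_sort (· ≤ ·)).mp hs),
    ← Finset.sort_image_of_strictAntiOn ((Nat.strictAntiOn_sub_Iic m).mono hS)]
  exact ⟨fun h => by rw [← Finset.sort_toFinset R (· ≤ ·), h, Finset.sort_toFinset],
    fun h => h ▸ rfl⟩

theorem Finset.union_sdiff_of_disjoint_of_subset {α : Type*} [DecidableEq α]
    {r s t : Finset α} (hr : Disjoint r t) (hs : s ⊆ t) :
    (r ∪ (t \ s)) \ t = r ∧ t \ (r ∪ (t \ s)) = s := by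
  constructor <;> ext x <;>
  · have := @Finset.disjoint_left.mp hr x
    have := @hs x
    simp only [Finset.mem_sdiff, Finset.mem_union]
    tauto

namespace OBRSKPaper

def IsTransversal (d : ℕ) (θ : Finset ℕ) : Prop :=
  θ ⊆ Finset.Icc 1 (2 * d) ∧ ∀ k ∈ Finset.Icc 1 (2 * d), (k ∈ θ ↔ 2 * d + 1 - k ∉ θ)

variable {d : ℕ} {β θ S : Finset ℕ}

theorem IsTransversal.of_mem_Itilde (h : θ ∈ Itilde d) : IsTransversal d θ :=
  ⟨h.1, h.2.2.1⟩

theorem mem_image_reflect_iff (hS : S ⊆ Finset.Icc 1 (2 * d)) {k : ℕ}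
    (hk : k ∈ Finset.Icc 1 (2 * d)) :
    k ∈ S.image (2 * d + 1 - ·) ↔ 2 * d + 1 - k ∈ S := by
  rw [Finset.mem_Icc] at hk
  rw [Finset.mem_image]
  constructor
  · rintro ⟨s, hs, rfl⟩
    have := Finset.mem_Icc.mp (hS hs)
    rwa [show 2 * d + 1 - (2 * d + 1 - s) = s by omega]
  · exact fun h => ⟨_, h, by omega⟩

theorem IsTransversal.image_reflect_subset (hβ : IsTransversal d β) (hS : S ⊆ β) :
    S.image (2 * d + 1 - ·) ⊆ Finset.Icc 1 (2 * d) \ β := by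
  intro x hx
  obtain ⟨s, hs, rfl⟩ := Finset.mem_image.mp hx
  have hsβ := hS hs
  have hs' := Finset.mem_Icc.mp (hβ.1 hsβ)
  exact Finset.mem_sdiff.mpr ⟨Finset.mem_Icc.mpr (by omega), (hβ.2 s (hβ.1 hsβ)).mp hsβ⟩

theorem IsTransversal.strictAntiOn_reflect (hβ : IsTransversal d β) (hS : S ⊆ β) :
    StrictAntiOn (2 * d + 1 - ·) (S : Set ℕ) :=
  (Nat.strictAntiOn_sub_Iic _).mono fun s hs => by
    have := Finset.mem_Icc.mp (hβ.1 (hS hs)); simp only [Set.mem_Iic]; omega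

theorem IsTransversal.mem_IbSS_iff (hβ : IsTransversal d β) {R : Finset ℕ} :
    (R, S) ∈ IbSS d β ↔ S ⊆ β ∧ Even S.card ∧ R = S.image (2 * d + 1 - ·) := by
  have hle {S} (hS : S ⊆ β) : ∀ s ∈ S, s ≤ 2 * d + 1 := fun s hs => by
    have := Finset.mem_Icc.mp (hβ.1 (hS hs)); omega
  constructor
  · rintro ⟨-, hS, hc, hev, hpair⟩
    exact ⟨hS, hc ▸ hev, (Finset.forall_sort_getD_add_eq_iff (hle hS) hc).mp hpair⟩
  · rintro ⟨hS, hev, rfl⟩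
    have hc := Finset.card_image_of_injOn (hβ.strictAntiOn_reflect hS).injOn
    exact ⟨hβ.image_reflect_subset hS, hS, hc, hc ▸ hev,
      (Finset.forall_sort_getD_add_eq_iff (hle hS) hc).mpr rfl⟩

theorem IsTransversal.disjoint_image_reflect_sdiff (hβ : IsTransversal d β) (hS : S ⊆ β) :
    Disjoint (S.image (2 * d + 1 - ·)) (β \ S) :=
  Finset.disjoint_of_subset_left (hβ.image_reflect_subset hS)
    (Finset.sdiff_disjoint.mono_right Finset.sdiff_subset)

theorem IsTransversal.sdiff_eq_image_reflect (hθ : IsTransversal d θ) (hβ : IsTransversal d β) :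
    θ \ β = (β \ θ).image (2 * d + 1 - ·) := by
  ext x
  by_cases hx : x ∈ Finset.Icc 1 (2 * d)
  · rw [mem_image_reflect_iff (Finset.sdiff_subset.trans hβ.1) hx]
    have := hθ.2 x hx
    have := hβ.2 x hx
    simp only [Finset.mem_sdiff]
    tauto
  · exact iff_of_false (fun h => hx (hθ.1 (Finset.mem_sdiff.mp h).1))
      fun h => hx (Finset.mem_sdiff.mp (hβ.image_reflect_subset Finset.sdiff_subset h)).1

theorem IsTransversal.flip (hβ : IsTransversal d β) (hS : S ⊆ β) :
    IsTransversal d (S.image (2 * d + 1 - ·) ∪ (β \ S)) := by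
  refine ⟨Finset.union_subset ((hβ.image_reflect_subset hS).trans Finset.sdiff_subset)
    (Finset.sdiff_subset.trans hβ.1), fun k hk => ?_⟩
  have hk' : 2 * d + 1 - k ∈ Finset.Icc 1 (2 * d) := by
    rw [Finset.mem_Icc] at hk ⊢; omega
  have hkk : 2 * d + 1 - (2 * d + 1 - k) = k := by rw [Finset.mem_Icc] at hk; omega
  simp only [Finset.mem_union, Finset.mem_sdiff, mem_image_reflect_iff (hS.trans hβ.1) hk,
    mem_image_reflect_iff (hS.trans hβ.1) hk', hkk]
  have := hβ.2 k hk
  have := @hS k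
  have := @hS (2 * d + 1 - k)
  tauto

theorem IsTransversal.card_filter_flip (hβ : IsTransversal d β) (hS : S ⊆ β) :
    ((S.image (2 * d + 1 - ·) ∪ (β \ S)).filter (d < ·)).card + 2 * (S.filter (d < ·)).card =
      (β.filter (d < ·)).card + S.card := by
  have hlow : (S.filter fun s => d < 2 * d + 1 - s) = S.filter (¬ d < ·) :=
    Finset.filter_congr fun _ _ => by omega
  have hhigh : (β \ S).filter (d < ·) = β.filter (d < ·) \ S.filter (d < ·) := by
    ext x; simp only [Finset.mem_filter, Finset.mem_sdiff]; tauto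
  rw [Finset.filter_union, Finset.card_union_of_disjoint
      (Finset.disjoint_filter_filter (hβ.disjoint_image_reflect_sdiff hS)),
    Finset.filter_image, Finset.card_image_of_injOn
      ((hβ.strictAntiOn_reflect hS).injOn.mono (Finset.coe_subset.mpr (Finset.filter_subset _ _))),
    hlow, hhigh, Finset.card_sdiff_of_subset (Finset.filter_subset_filter _ hS)]
  have := Finset.card_filter_add_card_filter_not (s := S) (d < ·)
  have := Finset.card_le_card (Finset.filter_subset_filter (d < ·) hS)
  omega

theorem flip_mem_Itilde (hβ : β ∈ Itilde d) (hS : S ⊆ β) (hev : Even S.card) :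
    S.image (2 * d + 1 - ·) ∪ (β \ S) ∈ Itilde d := by
  have hT := IsTransversal.of_mem_Itilde hβ
  refine ⟨(hT.flip hS).1, ?_, (hT.flip hS).2, ?_⟩
  · rw [Finset.card_union_of_disjoint (hT.disjoint_image_reflect_sdiff hS),
      Finset.card_image_of_injOn (hT.strictAntiOn_reflect hS).injOn,
      Finset.card_sdiff_of_subset hS, hβ.2.1]
    have := hβ.2.1 ▸ Finset.card_le_card hS
    omega
  · have := hT.card_filter_flip hS
    have := hβ.2.2.2
    rw [Nat.even_iff] at *
    omega

theorem sdiff_mem_IbSS (hβ : β ∈ Itilde d) (hθ : θ ∈ Itilde d) :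
    (θ \ β, β \ θ) ∈ IbSS d β ∧ (θ \ β) ∪ (β \ (β \ θ)) = θ := by
  have hβT := IsTransversal.of_mem_Itilde hβ
  have himage := (IsTransversal.of_mem_Itilde hθ).sdiff_eq_image_reflect hβT
  have hrec : (θ \ β) ∪ (β \ (β \ θ)) = θ := by
    rw [Finset.sdiff_sdiff_self_left, Finset.inter_comm, Finset.sdiff_union_inter]
  refine ⟨hβT.mem_IbSS_iff.mpr ⟨Finset.sdiff_subset, ?_, himage⟩, hrec⟩
  have := hβT.card_filter_flip (S := β \ θ) Finset.sdiff_subset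
  rw [← himage, hrec] at this
  have := hβ.2.2.2
  have := hθ.2.2.2
  rw [Nat.even_iff] at *
  omega

end OBRSKPaper

theorem stmt14_general (d : ℕ) (β : Finset ℕ) (hβ : β ∈ Itilde d) :
    Set.BijOn (fun RS : Finset ℕ × Finset ℕ => RS.1 ∪ (β \ RS.2)) (IbSS d β) (Itilde d) ∧
    (∀ RS ∈ IbSS d β,
      ((RS.1 ∪ (β \ RS.2)) \ β, β \ (RS.1 ∪ (β \ RS.2))) = RS) ∧
    (∀ θ ∈ Itilde d,
      (θ \ β, β \ θ) ∈ IbSS d β ∧ (θ \ β) ∪ (β \ (β \ θ)) = θ) ∧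
    ((∅, ∅) : Finset ℕ × Finset ℕ) ∈ IbSS d β ∧
    ((∅ : Finset ℕ) ∪ (β \ (∅ : Finset ℕ))) = β := by
  have hβT := IsTransversal.of_mem_Itilde hβ
  have hinv : ∀ RS ∈ IbSS d β,
      ((RS.1 ∪ (β \ RS.2)) \ β, β \ (RS.1 ∪ (β \ RS.2))) = RS := by
    rintro ⟨R, S⟩ ⟨hR, hS, -⟩
    obtain ⟨hR', hS'⟩ := Finset.union_sdiff_of_disjoint_of_subset
      (Finset.disjoint_of_subset_left hR Finset.sdiff_disjoint) hS
    rw [hR', hS']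
  have hmaps : Set.MapsTo (fun RS : Finset ℕ × Finset ℕ => RS.1 ∪ (β \ RS.2))
      (IbSS d β) (Itilde d) := by
    rintro ⟨R, S⟩ hRS
    obtain ⟨hS, hev, rfl⟩ := hβT.mem_IbSS_iff.mp hRS
    exact flip_mem_Itilde hβ hS hev
  refine ⟨Set.InvOn.bijOn (f' := fun θ => (θ \ β, β \ θ))
      ⟨hinv, fun θ hθ => (sdiff_mem_IbSS hβ hθ).2⟩ hmaps fun θ hθ => (sdiff_mem_IbSS hβ hθ).1,
    hinv, fun θ hθ => sdiff_mem_IbSS hβ hθ,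
    hβT.mem_IbSS_iff.mpr ⟨Finset.empty_subset _, by simp, by simp⟩, by simp⟩

/-- For `β ∈ Ĩ(d)`, the map `(R,S) ↦ R ∪̇ (β ∖ S)` is a bijection from
`I_β(Skew-symm)` onto `Ĩ(d)`, with inverse `θ ↦ (θ ∖ β, β ∖ θ)`; moreover `(∅,∅)` maps
to `β`. -/
theorem stmt14 (d : ℕ) (hd : 0 < d) (β : Finset ℕ) (hβ : β ∈ Itilde d) :
    Set.BijOn (fun RS : Finset ℕ × Finset ℕ => RS.1 ∪ (β \ RS.2)) (IbSS d β) (Itilde d) ∧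
    (∀ RS ∈ IbSS d β,
      ((RS.1 ∪ (β \ RS.2)) \ β, β \ (RS.1 ∪ (β \ RS.2))) = RS) ∧
    (∀ θ ∈ Itilde d,
      (θ \ β, β \ θ) ∈ IbSS d β ∧ (θ \ β) ∪ (β \ (β \ θ)) = θ) ∧
    ((∅, ∅) : Finset ℕ × Finset ℕ) ∈ IbSS d β ∧
    ((∅ : Finset ℕ) ∪ (β \ (∅ : Finset ℕ))) = β :=
  stmt14_general d β hβ
end

section
/- Let {π1,π2} be a pair of negative skew-symmetric lexicographic arrays of degree 2t, with π1 = (b_1…b_t / a_1…a_t) and π2 = (c_1…c_t / d_1…d_t), and let (P^(i),Q^(i)) be the intermediate notched bitableaux produced by the OBRSK algorithm. If l, l' ∈ {1,…,t} satisfy l < l' and b_l = b_{l'}, then the number (counted from the top) of the row of P^(l') in which the entry d_{t+1−l'} was placed is strictly greater than the number of the row of P^(l') in which the entry d_{t+1−l} was placed. -/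
open OBRSKPaper

/-!
At step `i` of OBRSK the entry `a_i` is inserted, by insertion bounded by `b_i`, into rows that
are weakly increasing, and `d_{t+1-i}` is then appended to the terminating row `K`. Rows stay
weakly increasing because `a_i < d_{t+1-i}` and the bottom row of `π2` is weakly decreasing, so
`d_{t+1-i}` dominates every entry placed so far. If `b_i = b_{i+1}` then `a_{i+1} ≤ a_i` by
lexicographicity, and the usual row-bumping argument applies: in every row the entry bumped by
`a_{i+1}` sits weakly left of, hence is at most, the entry bumped at step `i`, and in row `K` the
new box of step `i` (which is `< b_i`) forces a further bump. So the terminating row strictly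
increases along a run of equal `b`'s.
-/

theorem List.Pairwise.getElem_le_getElem {α : Type*} [Preorder α] {l : List α}
    (hl : l.Pairwise (· ≤ ·)) {i j : ℕ} (hij : i ≤ j) (hj : j < l.length) :
    l[i]'(hij.trans_lt hj) ≤ l[j] :=
  hl.rel_get_of_le (a := ⟨i, hij.trans_lt hj⟩) (b := ⟨j, hj⟩) hij

theorem List.Pairwise.take_append_cons_drop {α : Type*} [Preorder α] {l : List α} {x : α}
    {i j : ℕ} (hl : l.Pairwise (· ≤ ·)) (hi : ∀ a ∈ l.take i, a ≤ x)
    (hj : ∀ a ∈ l.drop j, x ≤ a) : (l.take i ++ x :: l.drop j).Pairwise (· ≤ ·) :=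
  List.pairwise_append.mpr ⟨hl.sublist (List.take_sublist _ _),
    List.pairwise_cons.mpr ⟨hj, hl.sublist (List.drop_sublist _ _)⟩,
    fun a ha e he => (List.mem_cons.mp he).elim (fun h => h ▸ hi a ha)
      fun he => (hi a ha).trans (hj e he)⟩

namespace OBRSKPaper

section BoundedRowInsertion

variable {b x : ℕ} {row : List ℕ}

theorem insertRowP_of_findIdx?_eq_some {j : ℕ}
    (h : row.findIdx? (fun y => decide (x ≤ y ∧ y < b)) = some j) :
    insertRowP b x row = (row.set j x, some (row.getD j 0), j + 1) := by
  simp only [insertRowP, h]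

theorem insertRowP_of_findIdx?_eq_none
    (h : row.findIdx? (fun y => decide (x ≤ y ∧ y < b)) = none) :
    insertRowP b x row =
      (insertAt row (row.takeWhile (fun y => decide (y < b))).length x, none,
        (row.takeWhile (fun y => decide (y < b))).length + 1) := by
  simp only [insertRowP, h]

theorem exists_insertRowP_bumped_of_mem {z : ℕ} (hz : z ∈ row) (hxz : x ≤ z) (hzb : z < b) :
    ∃ y, (insertRowP b x row).2.1 = some y := by
  rcases hf : row.findIdx? (fun y => decide (x ≤ y ∧ y < b)) with _ | j
  · have := List.findIdx?_eq_none_iff.mp hf z hz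
    simp only [decide_eq_false_iff_not, not_and, not_lt] at this
    exact absurd (this hxz) (not_le.mpr hzb)
  · exact ⟨_, by rw [insertRowP_of_findIdx?_eq_some hf]⟩

theorem insertRowP_bumped_spec {y : ℕ} (h : (insertRowP b x row).2.1 = some y) :
    y ∈ row ∧ x ≤ y ∧ y < b := by
  rcases hf : row.findIdx? (fun y => decide (x ≤ y ∧ y < b)) with _ | j
  · simp [insertRowP_of_findIdx?_eq_none hf] at h
  · obtain ⟨hj, hpj, -⟩ := List.findIdx?_eq_some_iff_getElem.mp hf
    simp only [insertRowP_of_findIdx?_eq_some hf, Option.some.injEq,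
      List.getD_eq_getElem _ _ hj] at h
    subst h
    simpa using And.intro (List.getElem_mem hj) hpj

theorem insertRowP_bumped_le (hs : row.Pairwise (· ≤ ·)) {y z : ℕ}
    (h : (insertRowP b x row).2.1 = some y) (hz : z ∈ row) (hxz : x ≤ z) (hzb : z < b) :
    y ≤ z := by
  rcases hf : row.findIdx? (fun y => decide (x ≤ y ∧ y < b)) with _ | j
  · simp [insertRowP_of_findIdx?_eq_none hf] at h
  · obtain ⟨hj, -, hmin⟩ := List.findIdx?_eq_some_iff_getElem.mp hf
    simp only [insertRowP_of_findIdx?_eq_some hf, Option.some.injEq,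
      List.getD_eq_getElem _ _ hj] at h
    subst h
    obtain ⟨m, hm, rfl⟩ := List.mem_iff_getElem.mp hz
    by_cases hjm : j ≤ m
    · exact hs.getElem_le_getElem hjm hm
    · exact absurd (by simpa using And.intro hxz hzb) (hmin m (by omega))

theorem mem_insertRowP_fst : x ∈ (insertRowP b x row).1 := by
  rcases hf : row.findIdx? (fun y => decide (x ≤ y ∧ y < b)) with _ | j
  · simp [insertRowP_of_findIdx?_eq_none hf, insertAt]
  · rw [insertRowP_of_findIdx?_eq_some hf]
    exact List.mem_set (List.findIdx?_eq_some_iff_getElem.mp hf).1 x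

theorem insertRowP_fst_subset : (insertRowP b x row).1 ⊆ x :: row := by
  intro e he
  rcases hf : row.findIdx? (fun y => decide (x ≤ y ∧ y < b)) with _ | j
  · rw [insertRowP_of_findIdx?_eq_none hf, insertAt] at he
    rcases List.mem_append.mp he with he | he
    · exact List.mem_cons_of_mem _ (List.mem_of_mem_take he)
    · rcases List.mem_cons.mp he with rfl | he
      · exact List.mem_cons_self
      · exact List.mem_cons_of_mem _ (List.mem_of_mem_drop he)
  · rw [insertRowP_of_findIdx?_eq_some hf] at he
    rcases List.mem_or_eq_of_mem_set he with he | rfl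
    · exact List.mem_cons_of_mem _ he
    · exact List.mem_cons_self

theorem pairwise_set_of_findIdx?_eq_some (hs : row.Pairwise (· ≤ ·)) {j : ℕ}
    (hf : row.findIdx? (fun y => decide (x ≤ y ∧ y < b)) = some j) :
    (row.set j x).Pairwise (· ≤ ·) := by
  obtain ⟨hj, hpj, hmin⟩ := List.findIdx?_eq_some_iff_getElem.mp hf
  simp only [decide_eq_true_eq] at hpj
  rw [List.set_eq_take_append_cons_drop, if_pos hj]
  refine hs.take_append_cons_drop (fun a ha => ?_) (fun e he => ?_)
  · obtain ⟨i, hi, rfl⟩ := List.mem_iff_getElem.mp ha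
    rw [List.length_take, lt_min_iff] at hi
    have hle := hs.getElem_le_getElem hi.1.le hj
    have := hmin i hi.1
    simp only [List.getElem_take, decide_eq_true_eq] at this ⊢
    omega
  · obtain ⟨m, hm, rfl⟩ := List.mem_iff_getElem.mp he
    rw [List.length_drop] at hm
    simp only [List.getElem_drop]
    exact hpj.1.trans (hs.getElem_le_getElem (by omega) (by omega))

theorem pairwise_insertAt_takeWhile (hs : row.Pairwise (· ≤ ·)) (hxb : x < b)
    (hnone : ∀ y ∈ row, ¬(x ≤ y ∧ y < b)) :
    (insertAt row (row.takeWhile (fun y => decide (y < b))).length x).Pairwise (· ≤ ·) := by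
  set q : ℕ → Bool := fun y => decide (y < b)
  have htake : row.take (row.takeWhile q).length = row.takeWhile q :=
    (List.prefix_iff_eq_take.mp (List.takeWhile_prefix q)).symm
  have hdrop : row.drop (row.takeWhile q).length = row.dropWhile q :=
    calc row.drop (row.takeWhile q).length
        = (row.takeWhile q ++ row.dropWhile q).drop (row.takeWhile q).length := by
          rw [List.takeWhile_append_dropWhile]
      _ = row.dropWhile q := List.drop_left' rfl
  refine hs.take_append_cons_drop (fun a ha => ?_) (fun e he => ?_)
  · have hab : q a = true := List.mem_takeWhile_imp (htake ▸ ha)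
    simp only [q, decide_eq_true_eq] at hab
    have := hnone a (List.mem_of_mem_take ha)
    omega
  · rw [hdrop] at he
    have hsd : (row.dropWhile q).Pairwise (· ≤ ·) := hs.sublist (List.dropWhile_suffix q).sublist
    have hhead := List.head_dropWhile_not q (l := row) (List.ne_nil_of_mem he)
    rcases hdw : row.dropWhile q with _ | ⟨h, t⟩
    · simp [hdw] at he
    · simp only [hdw, List.head_cons, q, decide_eq_false_iff_not, not_lt] at hhead
      rw [hdw] at he hsd
      rcases List.mem_cons.mp he with rfl | he
      · omega
      · exact hxb.le.trans (hhead.trans (List.rel_of_pairwise_cons hsd he))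

theorem pairwise_insertRowP_fst (hs : row.Pairwise (· ≤ ·)) (hxb : x < b) :
    (insertRowP b x row).1.Pairwise (· ≤ ·) := by
  rcases hf : row.findIdx? (fun y => decide (x ≤ y ∧ y < b)) with _ | j
  · rw [insertRowP_of_findIdx?_eq_none hf]
    exact pairwise_insertAt_takeWhile hs hxb (by simpa using List.findIdx?_eq_none_iff.mp hf)
  · rw [insertRowP_of_findIdx?_eq_some hf]
    exact pairwise_set_of_findIdx?_eq_some hs hf

end BoundedRowInsertion

section BoundedInsertion

/-- The (1-indexed) row in which bounded insertion of `x` ends. -/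
def insertionRow (b : ℕ) (rows : List (List ℕ)) (x : ℕ) : ℕ := (insertP b rows x).2.length

def obrskStepP (b d : ℕ) (rows : List (List ℕ)) (x : ℕ) : List (List ℕ) :=
  modifyRow (insertP b rows x).1 (insertionRow b rows x - 1) (· ++ [d])

theorem modifyRow_cons_zero (r : List ℕ) (rs : List (List ℕ)) (f : List ℕ → List ℕ) :
    modifyRow (r :: rs) 0 f = f r :: rs := rfl

theorem modifyRow_cons_succ (r : List ℕ) (rs : List (List ℕ)) (k : ℕ)
    (f : List ℕ → List ℕ) : modifyRow (r :: rs) (k + 1) f = r :: modifyRow rs k f := rfl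

theorem mem_modifyRow {rows : List (List ℕ)} {k : ℕ} {f : List ℕ → List ℕ} {r : List ℕ}
    (h : r ∈ modifyRow rows k f) : r ∈ rows ∨ ∃ r₀ ∈ rows, r = f r₀ := by
  induction rows generalizing k with
  | nil => simp [modifyRow] at h
  | cons r₁ rs ih =>
    cases k with
    | zero =>
      rcases List.mem_cons.mp h with rfl | h
      · exact Or.inr ⟨r₁, List.mem_cons_self, rfl⟩
      · exact Or.inl (List.mem_cons_of_mem _ h)
    | succ k =>
      rcases List.mem_cons.mp h with rfl | h
      · exact Or.inl List.mem_cons_self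
      · rcases ih h with h | ⟨r₀, hr₀, rfl⟩
        · exact Or.inl (List.mem_cons_of_mem _ h)
        · exact Or.inr ⟨r₀, List.mem_cons_of_mem _ hr₀, rfl⟩

variable {b d x : ℕ} {row : List ℕ} {rest : List (List ℕ)}

theorem insertP_nil : insertP b [] x = ([[x]], [1]) := rfl

theorem insertP_cons_of_bumped_eq_none (h : (insertRowP b x row).2.1 = none) :
    insertP b (row :: rest) x =
      ((insertRowP b x row).1 :: rest, [(insertRowP b x row).2.2]) := by
  rcases hr : insertRowP b x row with ⟨row', _ | y, j⟩
  · simp [insertP, hr]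
  · simp [hr] at h

theorem insertP_cons_of_bumped_eq_some {y : ℕ} (h : (insertRowP b x row).2.1 = some y) :
    insertP b (row :: rest) x =
      ((insertRowP b x row).1 :: (insertP b rest y).1,
        (insertRowP b x row).2.2 :: (insertP b rest y).2) := by
  rcases hr : insertRowP b x row with ⟨row', _ | y', j⟩
  · simp [hr] at h
  · simp only [hr, Option.some.injEq] at h
    subst h
    simp [insertP, hr]

theorem insertionRow_pos (rows : List (List ℕ)) : 0 < insertionRow b rows x := by
  cases rows with
  | nil => simp [insertionRow, insertP_nil]
  | cons row rest =>
    rcases h : (insertRowP b x row).2.1 with _ | y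
    · simp [insertionRow, insertP_cons_of_bumped_eq_none h]
    · simp [insertionRow, insertP_cons_of_bumped_eq_some h]

theorem insertionRow_cons_of_bumped_eq_some {y : ℕ} (h : (insertRowP b x row).2.1 = some y) :
    insertionRow b (row :: rest) x = insertionRow b rest y + 1 := by
  simp [insertionRow, insertP_cons_of_bumped_eq_some h]

theorem one_lt_insertionRow_cons_of_mem {z : ℕ} (hz : z ∈ row) (hxz : x ≤ z) (hzb : z < b) :
    1 < insertionRow b (row :: rest) x := by
  obtain ⟨y, hy⟩ := exists_insertRowP_bumped_of_mem hz hxz hzb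
  rw [insertionRow_cons_of_bumped_eq_some hy]
  exact Nat.succ_lt_succ (insertionRow_pos rest)

theorem obrskStepP_nil : obrskStepP b d [] x = [[x, d]] := rfl

theorem obrskStepP_cons_of_bumped_eq_none (h : (insertRowP b x row).2.1 = none) :
    obrskStepP b d (row :: rest) x = ((insertRowP b x row).1 ++ [d]) :: rest := by
  simp [obrskStepP, insertionRow, insertP_cons_of_bumped_eq_none h, modifyRow_cons_zero]

theorem obrskStepP_cons_of_bumped_eq_some {y : ℕ} (h : (insertRowP b x row).2.1 = some y) :
    obrskStepP b d (row :: rest) x = (insertRowP b x row).1 :: obrskStepP b d rest y := by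
  obtain ⟨k, hk⟩ := Nat.exists_eq_add_one_of_ne_zero (insertionRow_pos (b := b) rest (x := y)).ne'
  rw [obrskStepP, insertionRow_cons_of_bumped_eq_some h, hk, Nat.add_sub_cancel,
    insertP_cons_of_bumped_eq_some h, modifyRow_cons_succ, obrskStepP, hk, Nat.add_sub_cancel]

theorem pairwise_insertP_fst {rows : List (List ℕ)} (hs : ∀ r ∈ rows, r.Pairwise (· ≤ ·))
    (hxb : x < b) : ∀ r ∈ (insertP b rows x).1, r.Pairwise (· ≤ ·) := by
  induction rows generalizing x with
  | nil => simp [insertP_nil]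
  | cons row rest ih =>
    have hrow := hs row List.mem_cons_self
    have hrest : ∀ r ∈ rest, r.Pairwise (· ≤ ·) := fun r hr => hs r (List.mem_cons_of_mem _ hr)
    rcases h : (insertRowP b x row).2.1 with _ | y
    · rw [insertP_cons_of_bumped_eq_none h]
      rintro r (_ | ⟨_, hr⟩)
      exacts [pairwise_insertRowP_fst hrow hxb, hrest r hr]
    · rw [insertP_cons_of_bumped_eq_some h]
      rintro r (_ | ⟨_, hr⟩)
      exacts [pairwise_insertRowP_fst hrow hxb, ih hrest (insertRowP_bumped_spec h).2.2 r hr]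

theorem flatten_insertP_fst_subset (rows : List (List ℕ)) :
    (insertP b rows x).1.flatten ⊆ x :: rows.flatten := by
  induction rows generalizing x with
  | nil => simp [insertP_nil]
  | cons row rest ih =>
    have hrow : (insertRowP b x row).1 ⊆ x :: (row :: rest).flatten := fun e he =>
      List.cons_subset_cons x (List.subset_append_left row rest.flatten)
        (insertRowP_fst_subset he)
    rcases h : (insertRowP b x row).2.1 with _ | y
    · rw [insertP_cons_of_bumped_eq_none h, List.flatten_cons]
      exact List.append_subset.mpr ⟨hrow, fun e he => by simp [he]⟩
    · rw [insertP_cons_of_bumped_eq_some h, List.flatten_cons]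
      refine List.append_subset.mpr ⟨hrow, fun e he => ?_⟩
      rcases List.mem_cons.mp (ih he) with rfl | he
      · simp [(insertRowP_bumped_spec h).1]
      · simp [he]

theorem pairwise_obrskStepP {rows : List (List ℕ)} (hs : ∀ r ∈ rows, r.Pairwise (· ≤ ·))
    (hd : ∀ e ∈ rows.flatten, e ≤ d) (hxb : x < b) (hxd : x ≤ d) :
    ∀ r ∈ obrskStepP b d rows x, r.Pairwise (· ≤ ·) := by
  intro r hr
  rcases mem_modifyRow hr with hr | ⟨r₀, hr₀, rfl⟩
  · exact pairwise_insertP_fst hs hxb r hr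
  · refine List.pairwise_append.mpr ⟨pairwise_insertP_fst hs hxb r₀ hr₀, by simp, ?_⟩
    intro e he _ hd'
    rw [List.mem_singleton.mp hd']
    rcases List.mem_cons.mp
      (flatten_insertP_fst_subset rows (List.mem_flatten.mpr ⟨r₀, hr₀, he⟩)) with rfl | he
    exacts [hxd, hd e he]

theorem flatten_obrskStepP_le {rows : List (List ℕ)} (hd : ∀ e ∈ rows.flatten, e ≤ d)
    (hxd : x ≤ d) : ∀ e ∈ (obrskStepP b d rows x).flatten, e ≤ d := by
  intro e he
  obtain ⟨r, hr, he⟩ := List.mem_flatten.mp he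
  have hins : ∀ r ∈ (insertP b rows x).1, ∀ e ∈ r, e ≤ d := fun r hr e he => by
    rcases List.mem_cons.mp
      (flatten_insertP_fst_subset rows (List.mem_flatten.mpr ⟨r, hr, he⟩)) with rfl | he
    exacts [hxd, hd e he]
  rcases mem_modifyRow hr with hr | ⟨r₀, hr₀, rfl⟩
  · exact hins r hr e he
  · rcases List.mem_append.mp he with he | he
    exacts [hins r₀ hr₀ e he, (List.mem_singleton.mp he).le]

theorem insertionRow_lt_insertionRow_obrskStepP {rows : List (List ℕ)}
    (hs : ∀ r ∈ rows, r.Pairwise (· ≤ ·)) {x' : ℕ} (hx' : x' ≤ x) (hxb : x < b) :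
    insertionRow b rows x < insertionRow b (obrskStepP b d rows x) x' := by
  induction rows generalizing x x' with
  | nil =>
    rw [obrskStepP_nil]
    exact one_lt_insertionRow_cons_of_mem List.mem_cons_self hx' hxb
  | cons row rest ih =>
    have hrow := hs row List.mem_cons_self
    have hrest : ∀ r ∈ rest, r.Pairwise (· ≤ ·) := fun r hr => hs r (List.mem_cons_of_mem _ hr)
    rcases h : (insertRowP b x row).2.1 with _ | y
    · rw [obrskStepP_cons_of_bumped_eq_none h]
      have hK : insertionRow b (row :: rest) x = 1 := by
        simp [insertionRow, insertP_cons_of_bumped_eq_none h]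
      rw [hK]
      exact one_lt_insertionRow_cons_of_mem
        (List.mem_append_left _ mem_insertRowP_fst) hx' hxb
    · obtain ⟨-, hxy, hyb⟩ := insertRowP_bumped_spec h
      rw [obrskStepP_cons_of_bumped_eq_some h, insertionRow_cons_of_bumped_eq_some h]
      obtain ⟨y', hy'⟩ := exists_insertRowP_bumped_of_mem mem_insertRowP_fst hx' hxb
      have hy'x : y' ≤ x := insertRowP_bumped_le (pairwise_insertRowP_fst hrow hxb) hy'
        mem_insertRowP_fst hx' hxb
      rw [insertionRow_cons_of_bumped_eq_some hy']
      exact Nat.succ_lt_succ (ih hrest (hy'x.trans hxy) hyb)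

end BoundedInsertion

theorem List.getD_pair_mem_zip {α β : Type*} {l₁ : List α} {l₂ : List β} {i : ℕ} (d₁ : α)
    (d₂ : β) (h₁ : i < l₁.length) (h₂ : i < l₂.length) :
    (l₁.getD i d₁, l₂.getD i d₂) ∈ l₁.zip l₂ := by
  rw [List.getD_eq_getElem _ _ h₁, List.getD_eq_getElem _ _ h₂, ← List.getElem_zip]
  exact List.getElem_mem (by simpa using And.intro h₁ h₂)

theorem LexTwoRow.antitoneOn {top bot : List ℕ} (h : LexTwoRow top bot) :
    AntitoneOn (fun k => top.getD k 0) (Set.Iio top.length) :=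
  antitoneOn_of_add_one_le Set.ordConnected_Iio fun k _ _ hk => (h k hk).1

namespace ArrayPair

variable {π : ArrayPair} {i : ℕ}

theorem length_quads_s16 (h : π.eqLen) : π.quads.length = π.t := by
  obtain ⟨ha, hc, hd⟩ := h
  simp [quads, ha, hc, hd, t]

theorem quads_getD (h : π.eqLen) (hi : i < π.t) :
    π.quads.getD i (0, 0, 0, 0) =
      (π.a.getD i 0, π.b.getD i 0, π.c.reverse.getD i 0, π.d.reverse.getD i 0) := by
  obtain ⟨ha, hc, hd⟩ := h
  have hq : i < π.quads.length := by rwa [length_quads_s16 ⟨ha, hc, hd⟩]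
  rw [List.getD_eq_getElem _ _ hq]
  simp only [quads, List.getElem_zip]
  rw [List.getD_eq_getElem _ _ (by omega), List.getD_eq_getElem _ _ hi,
    List.getD_eq_getElem _ _ (by rwa [List.length_reverse, hc]),
    List.getD_eq_getElem _ _ (by rwa [List.length_reverse, hd])]
  rfl

theorem fst_stepState_succ (h : π.eqLen) (hi : i < π.t) :
    (stepState π (i + 1)).1 =
      obrskStepP (π.b.getD i 0) (π.d.reverse.getD i 0) (stepState π i).1 (π.a.getD i 0) := by
  have hq : i < π.quads.length := by rwa [length_quads_s16 h]
  rw [stepState, List.take_add_one, List.getElem?_eq_getElem hq, List.foldl_append,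
    ← List.getD_eq_getElem _ (0, 0, 0, 0) hq, quads_getD h hi]
  rfl

theorem stepK_succ (h : π.eqLen) (hi : i < π.t) :
    stepK π (i + 1) = insertionRow (π.b.getD i 0) (stepState π i).1 (π.a.getD i 0) := by
  simp only [stepK, Nat.add_sub_cancel, quads_getD h hi]
  rfl

theorem Negative.a_lt_b (hneg : π.Negative) (h : π.eqLen) (hi : i < π.t) :
    π.a.getD i 0 < π.b.getD i 0 :=
  hneg _ (List.getD_pair_mem_zip 0 0 (by rwa [h.1]) hi)

theorem SkewSymmLex.a_lt_d_reverse (hlex : π.SkewSymmLex) (hi : i < π.t) :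
    π.a.getD i 0 < π.d.reverse.getD i 0 := by
  obtain ⟨⟨ha, -, hd⟩, -, -, -, had, -⟩ := hlex
  exact had _ (List.getD_pair_mem_zip 0 0 (by rwa [ha]) (by rwa [List.length_reverse, hd]))

theorem SkewSymmLex.antitoneOn_b (hlex : π.SkewSymmLex) :
    AntitoneOn (fun k => π.b.getD k 0) (Set.Iio π.t) :=
  hlex.2.2.1.antitoneOn

theorem SkewSymmLex.monotoneOn_d_reverse (hlex : π.SkewSymmLex) :
    MonotoneOn (fun k => π.d.reverse.getD k 0) (Set.Iio π.t) := by
  obtain ⟨⟨-, -, hd⟩, -, -, hdc, -⟩ := hlex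
  intro i hi j hj hij
  simp only [Set.mem_Iio] at hi hj
  simp only [List.getD_reverse i (by rwa [hd]), List.getD_reverse j (by rwa [hd]), hd]
  exact hdc.antitoneOn (Set.mem_Iio.mpr (by omega)) (Set.mem_Iio.mpr (by omega)) (by omega)

theorem stepState_fst_pairwise_and_le (hlex : π.SkewSymmLex) (hneg : π.Negative) (hi : i < π.t) :
    (∀ r ∈ (stepState π i).1, r.Pairwise (· ≤ ·)) ∧
      ∀ e ∈ (stepState π i).1.flatten, e ≤ π.d.reverse.getD i 0 := by
  induction i with
  | zero => simp [stepState]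
  | succ i ih =>
    obtain ⟨hs, hd⟩ := ih (by omega)
    have hxb := hneg.a_lt_b hlex.1 (i := i) (by omega)
    have hxd := (hlex.a_lt_d_reverse (i := i) (by omega)).le
    have hdd : π.d.reverse.getD i 0 ≤ π.d.reverse.getD (i + 1) 0 :=
      hlex.monotoneOn_d_reverse (Set.mem_Iio.mpr (by omega)) (Set.mem_Iio.mpr hi) (by omega)
    rw [fst_stepState_succ hlex.1 (by omega)]
    exact ⟨pairwise_obrskStepP hs hd hxb hxd,
      fun e he => (flatten_obrskStepP_le hd hxd e he).trans hdd⟩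

theorem stepK_lt_stepK_succ (hlex : π.SkewSymmLex) (hneg : π.Negative) (hi : i + 1 < π.t)
    (hb : π.b.getD i 0 = π.b.getD (i + 1) 0) : stepK π (i + 1) < stepK π (i + 2) := by
  have ha : π.a.getD (i + 1) 0 ≤ π.a.getD i 0 := (hlex.2.2.1 i hi).2 hb.symm
  rw [stepK_succ hlex.1 (by omega), stepK_succ hlex.1 hi, fst_stepState_succ hlex.1 (by omega),
    ← hb]
  exact insertionRow_lt_insertionRow_obrskStepP
    (stepState_fst_pairwise_and_le hlex hneg (by omega)).1 ha (hneg.a_lt_b hlex.1 (by omega))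

end ArrayPair

end OBRSKPaper

/-- For a pair of negative skew-symmetric lexicographic arrays, if
`l < l'` and `b_l = b_{l'}`, then the (top-to-bottom) number of the row in which
`d_{t+1−l'}` was placed at step `l'` of the OBRSK algorithm is strictly greater than the
number of the row in which `d_{t+1−l}` was placed at step `l`. -/
theorem stmt16 (π : ArrayPair) (hlex : π.SkewSymmLex) (hneg : π.Negative)
    (l l' : ℕ) (hl1 : 1 ≤ l) (hll' : l < l') (hl'2 : l' ≤ π.t)
    (hb : π.b.getD (l - 1) 0 = π.b.getD (l' - 1) 0) :
    stepK π l < stepK π l' := by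
  have hb_const : ∀ k, l - 1 ≤ k → k ≤ l' - 1 → π.b.getD k 0 = π.b.getD (l - 1) 0 :=
    fun k hk hk' => le_antisymm
      (hlex.antitoneOn_b (Set.mem_Iio.mpr (by omega)) (Set.mem_Iio.mpr (by omega)) hk)
      (hb ▸ hlex.antitoneOn_b (Set.mem_Iio.mpr (by omega)) (Set.mem_Iio.mpr (by omega)) hk')
  have hstrict : StrictMonoOn (stepK π) (Set.Icc l l') :=
    strictMonoOn_of_lt_add_one Set.ordConnected_Icc fun k _ hk hk' => by
      simp only [Set.mem_Icc] at hk hk'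
      obtain ⟨i, rfl⟩ : ∃ i, k = i + 1 := ⟨k - 1, by omega⟩
      exact ArrayPair.stepK_lt_stepK_succ hlex hneg (by omega)
        (by rw [hb_const i (by omega) (by omega), hb_const (i + 1) (by omega) (by omega)])
  exact hstrict ⟨le_rfl, hll'.le⟩ ⟨hll'.le, le_rfl⟩ hll'
end
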